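/- arXiv:1606.08939 — 8 statements merged into one kernel-verified Lean document; each statement's English description precedes it below -/
import Mathlib

section
/- Let β > 0 and let (A(t))_{t∈ℕ} be a sequence of n×n row-stochastic matrices such that for every t, A(t) is β-rooted. Then for every s ∈ ℕ there exists a stochastic vector q_s ∈ ℝⁿ such that the backward products Φ(t,s) = A(t)A(t−1)⋯A(s) converge entrywise, as t → ∞, to the rank-one matrix 𝟏 q_sᵀ (the matrix whose i-th row is q_sᵀ for every i). -/
open Filter

/-- A matrix is row-stochastic if it has nonnegative entries and each row sums to 1. -/
def RowStochastic {n : ℕ} (A : Matrix (Fin n) (Fin n) ℝ) : Prop :=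
  (∀ i j, 0 ≤ A i j) ∧ ∀ i, ∑ j, A i j = 1

/-- A vector is stochastic if its entries are nonnegative and sum to 1. -/
def StochasticVec {n : ℕ} (q : Fin n → ℝ) : Prop :=
  (∀ i, 0 ≤ q i) ∧ ∑ i, q i = 1

/-- A directed graph is rooted if some vertex has a directed path to every other vertex. -/
def Rooted {V : Type*} (E : V → V → Prop) : Prop :=
  ∃ r : V, ∀ v : V, Relation.ReflTransGen E r v

/-- A row-stochastic matrix `A` is `β`-rooted if its diagonal entries are at least `β`
and the directed graph with an edge from `j` to `i` whenever `i ≠ j` and `A i j ≥ β`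
is rooted. -/
def BetaRooted {n : ℕ} (β : ℝ) (A : Matrix (Fin n) (Fin n) ℝ) : Prop :=
  (∀ i, β ≤ A i i) ∧ Rooted (fun j i : Fin n => i ≠ j ∧ β ≤ A i j)

/-- The backward product `Φ(t,s) = A(t) A(t-1) ⋯ A(s)` (for `t ≥ s`). -/
def backProd {n : ℕ} (A : ℕ → Matrix (Fin n) (Fin n) ℝ) (s t : ℕ) :
    Matrix (Fin n) (Fin n) ℝ :=
  (((List.range' s (t + 1 - s)).reverse).map A).prod

/-!
Let `γ = β ^ (n (n - 1))`. By pigeonhole, some vertex is a root of at least `n - 1` of any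
`n (n - 1)` consecutive graphs, and then the product of those matrices has a column with all entries
`≥ γ`. Multiplying by a row-stochastic matrix never increases the maximum of a vector nor decreases
its minimum, and multiplying by one with such a column shrinks `max - min` by the factor `1 - γ`.
Hence, for every `x`, the monotone sequences `max (Φ x)` and `min (Φ x)` have a common limit, so
`Φ x` tends to a constant vector; taking `x` a basis vector gives the columns of `𝟏 qᵀ`.
-/

open Finset Matrix Topology

section Products

variable {M : Type*} [Monoid M]

/-- `leftProd B k = B (k - 1) * ⋯ * B 1 * B 0`, the paper's `Φ(k - 1, 0)`; `leftProd B 0 = 1`. -/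
def leftProd (B : ℕ → M) : ℕ → M
  | 0 => 1
  | k + 1 => B k * leftProd B k

lemma leftProd_add (B : ℕ → M) (t : ℕ) :
    ∀ l, leftProd B (t + l) = leftProd (fun u => B (t + u)) l * leftProd B t
  | 0 => by simp [leftProd]
  | l + 1 => by
    rw [← add_assoc, leftProd, leftProd_add B t l, leftProd, mul_assoc]

lemma prod_map_reverse_range'_eq_leftProd (B : ℕ → M) (s : ℕ) :
    ∀ k, ((List.range' s k).reverse.map B).prod = leftProd (fun u => B (s + u)) k
  | 0 => rfl
  | k + 1 => by
    simp only [List.range'_concat, List.reverse_append, List.reverse_singleton,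
      List.singleton_append, List.map_cons, List.prod_cons, one_mul,
      prod_map_reverse_range'_eq_leftProd B s k, leftProd]

end Products

variable {n : ℕ}

lemma backProd_add (A : ℕ → Matrix (Fin n) (Fin n) ℝ) (s m : ℕ) :
    backProd A s (s + m) = leftProd (fun u => A (s + u)) (m + 1) := by
  rw [backProd, show s + m + 1 - s = m + 1 by omega, prod_map_reverse_range'_eq_leftProd]

namespace RowStochastic

variable {P Q : Matrix (Fin n) (Fin n) ℝ}

lemma one : RowStochastic (1 : Matrix (Fin n) (Fin n) ℝ) :=
  ⟨fun i j => by by_cases h : i = j <;> simp [one_apply, h], fun i => by simp [one_apply]⟩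

lemma mul (hP : RowStochastic P) (hQ : RowStochastic Q) : RowStochastic (P * Q) := by
  refine ⟨fun i j => ?_, fun i => ?_⟩
  · rw [mul_apply]; exact sum_nonneg fun k _ => mul_nonneg (hP.1 i k) (hQ.1 k j)
  · calc ∑ j, (P * Q) i j = ∑ k, P i k * ∑ j, Q k j := by
          simp only [mul_apply, mul_sum]; exact sum_comm
      _ = 1 := by simp only [hQ.2, mul_one, hP.2]

lemma leftProd {B : ℕ → Matrix (Fin n) (Fin n) ℝ} (hB : ∀ t, RowStochastic (B t)) :
    ∀ k, RowStochastic (_root_.leftProd B k)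
  | 0 => one
  | k + 1 => (hB k).mul (leftProd hB k)

lemma mulVec_const_sub (hP : RowStochastic P) (c : ℝ) (x : Fin n → ℝ) (i : Fin n) :
    (P *ᵥ fun j => c - x j) i = c - (P *ᵥ x) i := by
  simp only [mulVec, dotProduct, mul_sub, sum_sub_distrib, ← sum_mul, hP.2, one_mul]

lemma mulVec_sub_const (hP : RowStochastic P) (x : Fin n → ℝ) (c : ℝ) (i : Fin n) :
    (P *ᵥ fun j => x j - c) i = (P *ᵥ x) i - c := by
  simp only [mulVec, dotProduct, mul_sub, sum_sub_distrib, ← sum_mul, hP.2, one_mul]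

lemma mul_le_mulVec (hP : RowStochastic P) {x : Fin n → ℝ} (hx : ∀ j, 0 ≤ x j) (i r : Fin n) :
    P i r * x r ≤ (P *ᵥ x) i :=
  single_le_sum (f := fun j => P i j * x j) (fun j _ => mul_nonneg (hP.1 i j) (hx j)) (mem_univ r)

lemma mul_sub_le_iSup_sub_mulVec (hP : RowStochastic P) (x : Fin n → ℝ) (i r : Fin n) :
    P i r * ((⨆ j, x j) - x r) ≤ (⨆ j, x j) - (P *ᵥ x) i := by
  rw [← hP.mulVec_const_sub]
  exact hP.mul_le_mulVec (fun j => sub_nonneg.2 (le_ciSup (Finite.bddAbove_range x) j)) i r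

lemma mul_sub_le_mulVec_sub_iInf (hP : RowStochastic P) (x : Fin n → ℝ) (i r : Fin n) :
    P i r * (x r - ⨅ j, x j) ≤ (P *ᵥ x) i - ⨅ j, x j := by
  rw [← hP.mulVec_sub_const]
  exact hP.mul_le_mulVec (fun j => sub_nonneg.2 (ciInf_le (Finite.bddBelow_range x) j)) i r

variable [Nonempty (Fin n)]

lemma iSup_mulVec_le (hP : RowStochastic P) (x : Fin n → ℝ) :
    ⨆ i, (P *ᵥ x) i ≤ ⨆ j, x j :=
  ciSup_le fun i => by
    nlinarith [hP.mul_sub_le_iSup_sub_mulVec x i i, hP.1 i i,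
      le_ciSup (Finite.bddAbove_range x) i]

lemma iInf_le_iInf_mulVec (hP : RowStochastic P) (x : Fin n → ℝ) :
    ⨅ j, x j ≤ ⨅ i, (P *ᵥ x) i :=
  le_ciInf fun i => by
    nlinarith [hP.mul_sub_le_mulVec_sub_iInf x i i, hP.1 i i,
      ciInf_le (Finite.bddBelow_range x) i]

lemma oscillation_mulVec_le (hP : RowStochastic P) {γ : ℝ} {r : Fin n} (hcol : ∀ i, γ ≤ P i r)
    (x : Fin n → ℝ) :
    (⨆ i, (P *ᵥ x) i) - (⨅ i, (P *ᵥ x) i) ≤ (1 - γ) * ((⨆ j, x j) - ⨅ j, x j) := by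
  have hup : ∀ i, (P *ᵥ x) i ≤ (⨆ j, x j) - γ * ((⨆ j, x j) - x r) := fun i => by
    nlinarith [hP.mul_sub_le_iSup_sub_mulVec x i r, hcol i,
      le_ciSup (Finite.bddAbove_range x) r]
  have hlo : ∀ i, (⨅ j, x j) + γ * (x r - ⨅ j, x j) ≤ (P *ᵥ x) i := fun i => by
    nlinarith [hP.mul_sub_le_mulVec_sub_iInf x i r, hcol i,
      ciInf_le (Finite.bddBelow_range x) r]
  linarith [ciSup_le hup, le_ciInf hlo]

end RowStochastic

lemma stochasticVec_of_tendsto {α : Type*} {l : Filter α} [l.NeBot]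
    {P : α → Matrix (Fin n) (Fin n) ℝ} (hP : ∀ t, RowStochastic (P t)) {i : Fin n}
    {q : Fin n → ℝ} (hq : ∀ j, Tendsto (fun t => P t i j) l (𝓝 (q j))) : StochasticVec q := by
  refine ⟨fun j => ge_of_tendsto' (hq j) fun t => (hP t).1 i j, ?_⟩
  refine tendsto_nhds_unique (tendsto_finsetSum univ fun j _ => hq j) ?_
  simp only [(hP _).2, tendsto_const_nhds]

lemma Relation.ReflTransGen.exists_rel_of_pred_of_not {V : Type*} {E : V → V → Prop} {p : V → Prop}
    {a b : V} (h : Relation.ReflTransGen E a b) (ha : p a) (hb : ¬ p b) :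
    ∃ u v, p u ∧ ¬ p v ∧ E u v := by
  induction h with
  | refl => exact absurd ha hb
  | @tail c d _ hcd ih =>
    by_cases hc : p c
    exacts [⟨c, d, hc, hb, hcd⟩, ih hc]

lemma min_card_le_card_of_ssubset {α : Type*} [Fintype α] {S : ℕ → Finset α} {p : ℕ → Prop}
    [DecidablePred p] (h0 : (S 0).Nonempty) (hmono : ∀ k, S k ⊆ S (k + 1))
    (hgrow : ∀ k, p k → S k ≠ univ → S k ⊂ S (k + 1)) :
    ∀ k, min (Fintype.card α) (#{t ∈ range k | p t} + 1) ≤ #(S k)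
  | 0 => by simp [h0]
  | k + 1 => by
    have ih := min_card_le_card_of_ssubset h0 hmono hgrow k
    have hle := card_le_card (hmono k)
    have huniv := card_le_univ (S (k + 1))
    rw [range_add_one, filter_insert]
    by_cases hpk : p k
    · rw [if_pos hpk, card_insert_of_notMem (by simp)]
      by_cases hk : S k = univ
      · rw [hk, card_univ] at hle; omega
      · have := card_lt_card (hgrow k hpk hk); omega
    · rw [if_neg hpk]; omega

variable {β : ℝ} {B : ℕ → Matrix (Fin n) (Fin n) ℝ}

lemma pow_succ_le_leftProd (hβ : 0 < β) (hB : ∀ t, RowStochastic (B t)) {k : ℕ} {i j r : Fin n}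
    (hij : β ≤ B k i j) (hjr : β ^ k ≤ leftProd B k j r) :
    β ^ (k + 1) ≤ leftProd B (k + 1) i r :=
  calc β ^ (k + 1) ≤ B k i j * leftProd B k j r := by
        rw [pow_succ']; exact mul_le_mul hij hjr (by positivity) (hβ.le.trans hij)
    _ ≤ ∑ l, B k i l * leftProd B k l r :=
        single_le_sum (f := fun l => B k i l * leftProd B k l r)
          (fun l _ => mul_nonneg ((hB k).1 i l) ((RowStochastic.leftProd hB k).1 l r)) (mem_univ j)

/-- Each time `r` is a root of the graph of `B k`, the set of rows `i` with
`β ^ k ≤ leftProd B k i r` gains a row along an edge leaving it; the diagonal keeps every row in. -/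
lemma exists_forall_pow_le_leftProd [Nonempty (Fin n)] (hβ : 0 < β)
    (hB : ∀ t, RowStochastic (B t)) (hroot : ∀ t, BetaRooted β (B t)) :
    ∃ r, ∀ i, β ^ (n * (n - 1)) ≤ leftProd B (n * (n - 1)) i r := by
  classical
  choose ρ hρ using fun t => (hroot t).2
  obtain ⟨r, -, hr⟩ := exists_le_card_fiber_of_mul_le_card_of_maps_to
    (s := range (n * (n - 1))) (f := ρ) (n := n - 1) (fun t _ => mem_univ (ρ t)) univ_nonempty
    (by simp)
  set S : ℕ → Finset (Fin n) := fun k => {i | β ^ k ≤ leftProd B k i r}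
  have hmono : ∀ k, S k ⊆ S (k + 1) := fun k i hi => by
    simp only [S, mem_filter_univ] at hi ⊢
    exact pow_succ_le_leftProd hβ hB ((hroot k).1 i) hi
  have hrS : ∀ k, r ∈ S k := Nat.rec (by simp [S, leftProd]) fun k ih => hmono k ih
  have hgrow : ∀ k, ρ k = r → S k ≠ univ → S k ⊂ S (k + 1) := fun k hk hS => by
    obtain ⟨v, hv⟩ := not_forall.1 (mt eq_univ_iff_forall.2 hS)
    obtain ⟨u, w, hu, hw, -, huw⟩ := (hk ▸ hρ k v).exists_rel_of_pred_of_not (p := (· ∈ S k))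
      (hrS k) hv
    refine (ssubset_iff_of_subset (hmono k)).2 ⟨w, ?_, hw⟩
    simp only [S, mem_filter_univ] at hu ⊢
    exact pow_succ_le_leftProd hβ hB huw hu
  have hcard := min_card_le_card_of_ssubset (p := (ρ · = r)) ⟨r, hrS 0⟩ hmono
    hgrow (n * (n - 1))
  have hfull : S (n * (n - 1)) = univ :=
    eq_univ_of_card _ (le_antisymm (card_le_univ _) (by simp only [Fintype.card_fin] at *; omega))
  refine ⟨r, fun i => ?_⟩
  have hi : i ∈ S (n * (n - 1)) := hfull ▸ mem_univ i
  simpa [S] using hi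

lemma exists_tendsto_of_oscillation_le {ι : Type*} [Finite ι] [Nonempty ι] {y : ℕ → ι → ℝ}
    (hsup : Antitone fun t => ⨆ i, y t i) (hinf : Monotone fun t => ⨅ i, y t i) {L : ℕ} {c : ℝ}
    (hc : c < 1)
    (hosc : ∀ t, (⨆ i, y (t + L) i) - (⨅ i, y (t + L) i) ≤ c * ((⨆ i, y t i) - ⨅ i, y t i)) :
    ∃ a, ∀ i, Tendsto (fun t => y t i) atTop (𝓝 a) := by
  set M := fun t => ⨆ i, y t i
  set m := fun t => ⨅ i, y t i
  have hle : ∀ t i, m t ≤ y t i ∧ y t i ≤ M t := fun t i =>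
    ⟨ciInf_le (Finite.bddBelow_range _) i, le_ciSup (Finite.bddAbove_range _) i⟩
  have hmM : ∀ t, m t ≤ M t := fun t =>
    have i := Classical.arbitrary ι
    (hle t i).1.trans (hle t i).2
  have hMlim := tendsto_atTop_ciInf hsup ⟨m 0, by
    rintro _ ⟨t, rfl⟩; exact (hinf (Nat.zero_le t)).trans (hmM t)⟩
  have hmlim := tendsto_atTop_ciSup hinf ⟨M 0, by
    rintro _ ⟨t, rfl⟩; exact (hmM t).trans (hsup (Nat.zero_le t))⟩
  set d := (⨅ t, M t) - ⨆ t, m t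
  have hd : d ≤ c * d := le_of_tendsto_of_tendsto'
    ((tendsto_add_atTop_iff_nat L).2 (hMlim.sub hmlim)) ((hMlim.sub hmlim).const_mul c) hosc
  have hd0 : 0 ≤ d := ge_of_tendsto' (hMlim.sub hmlim) fun t => sub_nonneg.2 (hmM t)
  have hMm : (⨅ t, M t) = ⨆ t, m t := by nlinarith
  exact ⟨_, fun i => tendsto_of_tendsto_of_tendsto_of_le_of_le (hMm ▸ hmlim) hMlim
    (fun t => (hle t i).1) (fun t => (hle t i).2)⟩

lemma exists_tendsto_leftProd_mulVec [Nonempty (Fin n)] (hβ : 0 < β)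
    (hB : ∀ t, RowStochastic (B t)) (hroot : ∀ t, BetaRooted β (B t)) (x : Fin n → ℝ) :
    ∃ a, ∀ i, Tendsto (fun t => (leftProd B t *ᵥ x) i) atTop (𝓝 a) := by
  have hstep : ∀ t, leftProd B (t + 1) *ᵥ x = B t *ᵥ (leftProd B t *ᵥ x) := fun t => by
    rw [mulVec_mulVec, leftProd]
  refine exists_tendsto_of_oscillation_le (L := n * (n - 1)) (c := 1 - β ^ (n * (n - 1)))
    (antitone_nat_of_succ_le fun t => ?_) (monotone_nat_of_le_succ fun t => ?_)
    (by linarith [pow_pos hβ (n * (n - 1))]) fun t => ?_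
  · simp only [hstep]; exact (hB t).iSup_mulVec_le _
  · simp only [hstep]; exact (hB t).iInf_le_iInf_mulVec _
  · obtain ⟨r, hr⟩ :=
      exists_forall_pow_le_leftProd hβ (fun u => hB (t + u)) (fun u => hroot (t + u))
    simp only [leftProd_add, ← mulVec_mulVec]
    exact (RowStochastic.leftProd (fun u => hB (t + u)) _).oscillation_mulVec_le hr _

theorem exists_tendsto_leftProd [Nonempty (Fin n)] (hβ : 0 < β)
    (hB : ∀ t, RowStochastic (B t)) (hroot : ∀ t, BetaRooted β (B t)) :
    ∃ q, StochasticVec q ∧ ∀ i j, Tendsto (fun t => leftProd B t i j) atTop (𝓝 (q j)) := by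
  have hcol : ∀ j, ∃ a, ∀ i, Tendsto (fun t => leftProd B t i j) atTop (𝓝 a) := fun j => by
    simpa [mulVec_single_one] using exists_tendsto_leftProd_mulVec hβ hB hroot (Pi.single j 1)
  choose q hq using hcol
  exact ⟨q, stochasticVec_of_tendsto (RowStochastic.leftProd hB) (i := Classical.arbitrary _)
    fun j => hq j _, fun i j => hq j i⟩

/-- For a sequence of `β`-rooted row-stochastic matrices, the backward products
`Φ(t,s)` converge entrywise, as `t → ∞`, to a rank-one matrix `𝟏 qₛᵀ` with `qₛ`
stochastic. -/
theorem stmt2 {n : ℕ} (β : ℝ) (hβ : 0 < β) (A : ℕ → Matrix (Fin n) (Fin n) ℝ)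
    (hstoch : ∀ t, RowStochastic (A t)) (hrooted : ∀ t, BetaRooted β (A t)) :
    ∀ s : ℕ, ∃ q : Fin n → ℝ, StochasticVec q ∧
      ∀ i j, Tendsto (fun t => backProd A s t i j) atTop (nhds (q j)) := by
  obtain ⟨root, -⟩ := (hrooted 0).2
  have : Nonempty (Fin n) := ⟨root⟩
  intro s
  obtain ⟨q, hq, hlim⟩ :=
    exists_tendsto_leftProd hβ (fun t => hstoch (s + t)) (fun t => hrooted (s + t))
  refine ⟨q, hq, fun i j => (tendsto_add_atTop_iff_nat s).1 ?_⟩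
  simp only [add_comm _ s, backProd_add]
  exact (tendsto_add_atTop_iff_nat 1).2 (hlim i j)
end

section
/- Let β > 0, L > 0, and let (A(t))_{t∈ℕ} be a sequence of n×n row-stochastic matrices each of which is β-rooted; let q_t, t ∈ ℕ, be stochastic vectors such that A(t)A(t−1)⋯A(s) → 𝟏 q_sᵀ entrywise as t → ∞ for each s. Let (α_t)_{t∈ℕ} be a nonnegative sequence with α_t → 0, and let (d(t))_{t∈ℕ} be vectors in ℝⁿ with ‖d(t)‖ ≤ L for all t. Define x(t+1) = A(t)x(t) − α_t d(t) for t ∈ ℕ, from an arbitrary x(0) ∈ ℝⁿ, and set y(t) = q_tᵀ x(t). Then ‖x(t) − 𝟏 y(t)‖ → 0 as t → ∞. -/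
open Filter

/-- The Euclidean norm of a vector in `ℝⁿ`. -/
noncomputable def euclNorm {n : ℕ} (v : Fin n → ℝ) : ℝ :=
  Real.sqrt (∑ i, (v i) ^ 2)

/-!
The spread `max x - min x` of the state controls `‖x - 𝟏 y‖`, because `y` is a convex
combination of the entries of `x`. Row-stochastic matrices never increase the spread, and a
product of `n * n` consecutive `β`-rooted matrices has a column bounded below by `β ^ (n * n)`,
so it contracts the spread by the factor `1 - β ^ (n * n)`. Over such a window the
perturbations `α t • d t` add at most `2 L ∑ α` to the spread, an error that tends to `0`;
hence the spread, and with it `‖x - 𝟏 y‖`, tends to `0`.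
-/

open Finset Matrix Topology

section Spread

variable {ι : Type*}

noncomputable def spread (v : ι → ℝ) : ℝ :=
  (⨆ i, v i) - ⨅ i, v i

lemma sub_le_spread [Finite ι] (v : ι → ℝ) (i j : ι) : v i - v j ≤ spread v :=
  sub_le_sub (Finite.le_ciSup v i) (Finite.ciInf_le v j)

lemma spread_nonneg [Finite ι] [Nonempty ι] (v : ι → ℝ) : 0 ≤ spread v := by
  obtain ⟨i⟩ := ‹Nonempty ι›
  simpa using sub_le_spread v i i

lemma spread_le_sub [Nonempty ι] {v : ι → ℝ} {a b : ℝ} (hle : ∀ i, v i ≤ a)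
    (hge : ∀ i, b ≤ v i) : spread v ≤ a - b :=
  sub_le_sub (ciSup_le hle) (le_ciInf hge)

lemma spread_le_spread_add_norm [Fintype ι] [Nonempty ι] (u w : ι → ℝ) :
    spread u ≤ spread w + 2 * ‖u - w‖ := by
  have hdist : ∀ i, |u i - w i| ≤ ‖u - w‖ := fun i => norm_le_pi_norm (u - w) i
  have := spread_le_sub (v := u) (a := (⨆ i, w i) + ‖u - w‖) (b := (⨅ i, w i) - ‖u - w‖)
    (fun i => by linarith [(abs_le.1 (hdist i)).2, Finite.le_ciSup w i])
    (fun i => by linarith [(abs_le.1 (hdist i)).1, Finite.ciInf_le w i])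
  linarith [show spread w = (⨆ i, w i) - ⨅ i, w i from rfl]

lemma sum_mul_le_iSup_sub [Fintype ι] {w : ι → ℝ} (hw0 : ∀ i, 0 ≤ w i) (hw1 : ∑ i, w i = 1)
    (v : ι → ℝ) (r : ι) : ∑ i, w i * v i ≤ (⨆ i, v i) - w r * ((⨆ i, v i) - v r) := by
  set M := ⨆ i, v i
  have hgap : w r * (M - v r) ≤ ∑ i, w i * (M - v i) :=
    single_le_sum (f := fun i => w i * (M - v i))
      (fun i _ => mul_nonneg (hw0 i) (sub_nonneg.2 (Finite.le_ciSup v i))) (mem_univ r)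
  have hsplit : ∑ i, w i * (M - v i) = M - ∑ i, w i * v i := by
    simp only [mul_sub, sum_sub_distrib, ← sum_mul, hw1, one_mul]
  linarith

lemma iInf_add_le_sum_mul [Fintype ι] {w : ι → ℝ} (hw0 : ∀ i, 0 ≤ w i) (hw1 : ∑ i, w i = 1)
    (v : ι → ℝ) (r : ι) : (⨅ i, v i) + w r * (v r - ⨅ i, v i) ≤ ∑ i, w i * v i := by
  set m := ⨅ i, v i
  have hgap : w r * (v r - m) ≤ ∑ i, w i * (v i - m) :=
    single_le_sum (f := fun i => w i * (v i - m))
      (fun i _ => mul_nonneg (hw0 i) (sub_nonneg.2 (Finite.ciInf_le v i))) (mem_univ r)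
  have hsplit : ∑ i, w i * (v i - m) = ∑ i, w i * v i - m := by
    simp only [mul_sub, sum_sub_distrib, ← sum_mul, hw1, one_mul]
  linarith

end Spread

section Stochastic

variable {n : ℕ}

lemma RowStochastic.apply_le_one {A : Matrix (Fin n) (Fin n) ℝ} (hA : RowStochastic A)
    (i j : Fin n) : A i j ≤ 1 :=
  hA.2 i ▸ single_le_sum (fun k _ => hA.1 i k) (mem_univ j)

lemma rowStochastic_one : RowStochastic (1 : Matrix (Fin n) (Fin n) ℝ) :=
  ⟨fun i j => by by_cases h : i = j <;> simp [one_apply, h], fun i => by simp [one_apply]⟩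

lemma RowStochastic.mul_s4 {A B : Matrix (Fin n) (Fin n) ℝ} (hA : RowStochastic A)
    (hB : RowStochastic B) : RowStochastic (A * B) := by
  refine ⟨fun i j => ?_, fun i => ?_⟩
  · rw [mul_apply]
    exact sum_nonneg fun k _ => mul_nonneg (hA.1 i k) (hB.1 k j)
  simp only [mul_apply]
  rw [sum_comm]
  simp only [← mul_sum, hB.2, mul_one, hA.2 i]

lemma RowStochastic.norm_mulVec_le {A : Matrix (Fin n) (Fin n) ℝ} (hA : RowStochastic A)
    (v : Fin n → ℝ) : ‖A *ᵥ v‖ ≤ ‖v‖ := by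
  refine (pi_norm_le_iff_of_nonneg (norm_nonneg v)).2 fun i => ?_
  calc ‖(A *ᵥ v) i‖ = |∑ j, A i j * v j| := rfl
    _ ≤ ∑ j, |A i j * v j| := abs_sum_le_sum_abs _ _
    _ ≤ ∑ j, A i j * ‖v‖ := sum_le_sum fun j _ => by
        rw [abs_mul, abs_of_nonneg (hA.1 i j)]
        exact mul_le_mul_of_nonneg_left (norm_le_pi_norm v j) (hA.1 i j)
    _ = ‖v‖ := by rw [← sum_mul, hA.2 i, one_mul]

lemma RowStochastic.spread_mulVec_le_of_le_col {A : Matrix (Fin n) (Fin n) ℝ}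
    (hA : RowStochastic A) {γ : ℝ} {r : Fin n} (hcol : ∀ i, γ ≤ A i r) (v : Fin n → ℝ) :
    spread (A *ᵥ v) ≤ (1 - γ) * spread v := by
  have : Nonempty (Fin n) := ⟨r⟩
  set M := ⨆ i, v i
  set m := ⨅ i, v i
  have hMr : 0 ≤ M - v r := sub_nonneg.2 (Finite.le_ciSup v r)
  have hmr : 0 ≤ v r - m := sub_nonneg.2 (Finite.ciInf_le v r)
  calc spread (A *ᵥ v) ≤ (M - γ * (M - v r)) - (m + γ * (v r - m)) := by
        refine spread_le_sub (fun i => ?_) (fun i => ?_)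
        · calc (A *ᵥ v) i ≤ M - A i r * (M - v r) := sum_mul_le_iSup_sub (hA.1 i) (hA.2 i) v r
            _ ≤ M - γ * (M - v r) := by nlinarith [hcol i]
        · calc m + γ * (v r - m) ≤ m + A i r * (v r - m) := by nlinarith [hcol i]
            _ ≤ (A *ᵥ v) i := iInf_add_le_sum_mul (hA.1 i) (hA.2 i) v r
    _ = (1 - γ) * spread v := by rw [spread]; ring

lemma RowStochastic.spread_mulVec_le [Nonempty (Fin n)] {A : Matrix (Fin n) (Fin n) ℝ}
    (hA : RowStochastic A) (v : Fin n → ℝ) : spread (A *ᵥ v) ≤ spread v := by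
  simpa using hA.spread_mulVec_le_of_le_col (r := Classical.arbitrary _) (fun i => hA.1 i _) v

lemma StochasticVec.norm_sub_dotProduct_le_spread [Nonempty (Fin n)] {q : Fin n → ℝ}
    (hq : StochasticVec q) (v : Fin n → ℝ) : ‖fun i => v i - ∑ j, q j * v j‖ ≤ spread v := by
  set r : Fin n := Classical.arbitrary _
  have hle : ∑ j, q j * v j ≤ ⨆ i, v i := (sum_mul_le_iSup_sub hq.1 hq.2 v r).trans
    (sub_le_self _ (mul_nonneg (hq.1 r) (sub_nonneg.2 (Finite.le_ciSup v r))))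
  have hge : ⨅ i, v i ≤ ∑ j, q j * v j :=
    (le_add_of_nonneg_right (mul_nonneg (hq.1 r) (sub_nonneg.2 (Finite.ciInf_le v r)))).trans
      (iInf_add_le_sum_mul hq.1 hq.2 v r)
  refine (pi_norm_le_iff_of_nonneg (spread_nonneg v)).2 fun i => abs_le.2 ⟨?_, ?_⟩ <;>
    simp only [spread] <;> linarith [Finite.le_ciSup v i, Finite.ciInf_le v i]

end Stochastic

section Window

variable {n : ℕ} {A : ℕ → Matrix (Fin n) (Fin n) ℝ}

/-- `windowProd A t m = A (t + m - 1) ⋯ A (t + 1) A t`, a product of `m` factors. -/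
def windowProd (A : ℕ → Matrix (Fin n) (Fin n) ℝ) (t : ℕ) : ℕ → Matrix (Fin n) (Fin n) ℝ
  | 0 => 1
  | m + 1 => A (t + m) * windowProd A t m

lemma rowStochastic_windowProd (hA : ∀ t, RowStochastic (A t)) (t : ℕ) :
    ∀ m, RowStochastic (windowProd A t m)
  | 0 => rowStochastic_one
  | m + 1 => (hA (t + m)).mul_s4 (rowStochastic_windowProd hA t m)

lemma norm_sub_windowProd_mulVec_le (hA : ∀ t, RowStochastic (A t)) {x e : ℕ → Fin n → ℝ}
    (hx : ∀ u, x (u + 1) = A u *ᵥ x u - e u) (t : ℕ) :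
    ∀ m, ‖x (t + m) - windowProd A t m *ᵥ x t‖ ≤ ∑ k ∈ range m, ‖e (t + k)‖
  | 0 => by simp [windowProd]
  | m + 1 => by
    have hstep : x (t + (m + 1)) - windowProd A t (m + 1) *ᵥ x t
        = A (t + m) *ᵥ (x (t + m) - windowProd A t m *ᵥ x t) - e (t + m) := by
      rw [← add_assoc, hx, windowProd, ← mulVec_mulVec, mulVec_sub]
      abel
    calc ‖x (t + (m + 1)) - windowProd A t (m + 1) *ᵥ x t‖
        ≤ ‖A (t + m) *ᵥ (x (t + m) - windowProd A t m *ᵥ x t)‖ + ‖e (t + m)‖ :=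
          hstep ▸ norm_sub_le _ _
      _ ≤ ∑ k ∈ range m, ‖e (t + k)‖ + ‖e (t + m)‖ := by
          gcongr
          exact ((hA _).norm_mulVec_le _).trans (norm_sub_windowProd_mulVec_le hA hx t m)
      _ = ∑ k ∈ range (m + 1), ‖e (t + k)‖ := (sum_range_succ _ _).symm

lemma spread_le_spread_windowProd_mulVec_add [Nonempty (Fin n)] (hA : ∀ t, RowStochastic (A t))
    {x e : ℕ → Fin n → ℝ} (hx : ∀ u, x (u + 1) = A u *ᵥ x u - e u) (t m : ℕ) :
    spread (x (t + m)) ≤ spread (windowProd A t m *ᵥ x t) + 2 * ∑ k ∈ range m, ‖e (t + k)‖ :=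
  (spread_le_spread_add_norm _ _).trans (add_le_add le_rfl
    (mul_le_mul_of_nonneg_left (norm_sub_windowProd_mulVec_le hA hx t m) zero_le_two))

lemma pow_succ_le_windowProd {β : ℝ} (hβ : 0 ≤ β) (hA : ∀ t, RowStochastic (A t)) {t m : ℕ}
    {i j k : Fin n} (hij : β ≤ A (t + m) i j) (hjk : β ^ m ≤ windowProd A t m j k) :
    β ^ (m + 1) ≤ windowProd A t (m + 1) i k :=
  calc β ^ (m + 1) = β * β ^ m := pow_succ' β m
    _ ≤ A (t + m) i j * windowProd A t m j k := mul_le_mul hij hjk (pow_nonneg hβ m) ((hA _).1 i j)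
    _ ≤ ∑ l, A (t + m) i l * windowProd A t m l k :=
        single_le_sum (f := fun l => A (t + m) i l * windowProd A t m l k)
          (fun l _ => mul_nonneg ((hA _).1 i l) ((rowStochastic_windowProd hA t m).1 l k))
          (mem_univ j)
    _ = windowProd A t (m + 1) i k := rfl

end Window

lemma Relation.ReflTransGen.exists_rel_of_not {α : Type*} {E : α → α → Prop} {p : α → Prop}
    {a b : α} (h : Relation.ReflTransGen E a b) (ha : p a) (hb : ¬ p b) :
    ∃ c d, p c ∧ ¬ p d ∧ E c d := by
  induction h with
  | refl => exact absurd ha hb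
  | @tail c d _ hcd ih =>
    by_cases hc : p c
    · exact ⟨c, d, hc, hb, hcd⟩
    · exact ih hc

lemma min_card_le_card_of_ssubset_succ {α : Type*} [Fintype α] {R : ℕ → Finset α}
    (p : ℕ → Prop) [DecidablePred p] (hmono : ∀ m, R m ⊆ R (m + 1))
    (hgrow : ∀ m, p m → R m ≠ univ → R m ⊂ R (m + 1)) :
    ∀ m, min (Fintype.card α) (#(R 0) + #{k ∈ range m | p k}) ≤ #(R m)
  | 0 => by simp
  | m + 1 => by
    have ih := min_card_le_card_of_ssubset_succ p hmono hgrow m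
    rw [range_add_one, filter_insert]
    split_ifs with hp
    · rw [card_insert_of_notMem (by simp)]
      by_cases hR : R m = univ
      · have hfull : R (m + 1) = univ := univ_subset_iff.1 (hR ▸ hmono m)
        rw [hfull, card_univ]
        exact min_le_left _ _
      · have := card_lt_card (hgrow m hp hR)
        omega
    · exact ih.trans (card_le_card (hmono m))

/-- Fix a vertex `r` that is the root at least `n` times among the first `n * n` steps
(pigeonhole). The rows `i` with `β ^ m ≤ windowProd A t m i r` form a growing set,
thanks to the diagonal; at a step rooted at `r` an edge leaves this set, so it gains a row. -/
lemma exists_forall_pow_le_windowProd {n : ℕ} [Nonempty (Fin n)] {β : ℝ} (hβ : 0 ≤ β)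
    {A : ℕ → Matrix (Fin n) (Fin n) ℝ} (hA : ∀ t, RowStochastic (A t))
    (hroot : ∀ t, BetaRooted β (A t)) (t : ℕ) :
    ∃ r, ∀ i, β ^ (n * n) ≤ windowProd A t (n * n) i r := by
  classical
  choose root hpath using fun s => (hroot s).2
  obtain ⟨r, -, hr⟩ := exists_le_card_fiber_of_mul_le_card_of_maps_to (s := range (n * n))
    (t := univ) (f := fun k => root (t + k)) (n := n) (fun _ _ => mem_univ _) univ_nonempty
    (by simp)
  set R : ℕ → Finset (Fin n) := fun m => {i | β ^ m ≤ windowProd A t m i r}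
  have hR : ∀ m i, i ∈ R m ↔ β ^ m ≤ windowProd A t m i r := fun m i => by simp [R]
  have hmono : ∀ m, R m ⊆ R (m + 1) := fun m i hi =>
    (hR _ _).2 (pow_succ_le_windowProd hβ hA ((hroot (t + m)).1 i) ((hR _ _).1 hi))
  have hr0 : r ∈ R 0 := (hR _ _).2 (by simp [windowProd])
  have hgrow : ∀ m, root (t + m) = r → R m ≠ univ → R m ⊂ R (m + 1) := by
    intro m hm hne
    obtain ⟨v, hv⟩ := not_forall.1 (mt eq_univ_iff_forall.2 hne)
    obtain ⟨j, i, hj, hi, -, hji⟩ := (hm ▸ hpath (t + m) v).exists_rel_of_not (p := (· ∈ R m))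
      (monotone_nat_of_le_succ hmono (Nat.zero_le m) hr0) hv
    exact (ssubset_iff_of_subset (hmono m)).2
      ⟨i, (hR _ _).2 (pow_succ_le_windowProd hβ hA hji ((hR _ _).1 hj)), hi⟩
  have hcard := min_card_le_card_of_ssubset_succ (fun k => root (t + k) = r) hmono hgrow (n * n)
  have hfull : R (n * n) = univ := by
    have h0 : 0 < #(R 0) := card_pos.2 ⟨r, hr0⟩
    have hle := card_le_univ (R (n * n))
    simp only [Fintype.card_fin] at hcard hle
    exact eq_univ_of_card _ (by simp only [Fintype.card_fin]; omega)
  exact ⟨r, fun i => (hR _ _).1 (hfull ▸ mem_univ i)⟩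

lemma spread_windowProd_mulVec_le {n : ℕ} [Nonempty (Fin n)] {β : ℝ} (hβ : 0 ≤ β)
    {A : ℕ → Matrix (Fin n) (Fin n) ℝ} (hA : ∀ t, RowStochastic (A t))
    (hroot : ∀ t, BetaRooted β (A t)) (t : ℕ) (v : Fin n → ℝ) :
    spread (windowProd A t (n * n) *ᵥ v) ≤ (1 - β ^ (n * n)) * spread v := by
  obtain ⟨r, hr⟩ := exists_forall_pow_le_windowProd hβ hA hroot t
  exact (rowStochastic_windowProd hA t _).spread_mulVec_le_of_le_col hr v

lemma le_pow_mul_add_div_of_le_mul_add {s : ℕ → ℝ} {a b : ℝ} (ha0 : 0 ≤ a) (ha1 : a < 1)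
    (hb : 0 ≤ b) (h : ∀ k, s (k + 1) ≤ a * s k + b) :
    ∀ k, s k ≤ a ^ k * s 0 + b / (1 - a)
  | 0 => by
    have : 0 ≤ b / (1 - a) := div_nonneg hb (sub_nonneg.2 ha1.le)
    simpa using this
  | k + 1 => by
    have ih := le_pow_mul_add_div_of_le_mul_add ha0 ha1 hb h k
    have hfix : a * (b / (1 - a)) + b = b / (1 - a) := by
      field_simp [(sub_pos.2 ha1).ne']
      ring
    calc s (k + 1) ≤ a * s k + b := h k
      _ ≤ a * (a ^ k * s 0 + b / (1 - a)) + b := by gcongr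
      _ = a ^ (k + 1) * s 0 + b / (1 - a) := by linear_combination hfix

/-- Iterating the window contraction from a time after which `ρ ≤ δ` pushes `S` below
`δ / γ + δ` for good. -/
lemma tendsto_zero_of_window_contraction {S ρ : ℕ → ℝ} {T : ℕ} {γ : ℝ} (hT : 0 < T)
    (hγ0 : 0 < γ) (hγ1 : γ ≤ 1) (hS : ∀ t, 0 ≤ S t) (hρ : Tendsto ρ atTop (𝓝 0))
    (hwin : ∀ t, S (t + T) ≤ (1 - γ) * S t + ρ t)
    (hstep : ∀ t, ∀ m < T, S (t + m) ≤ S t + ρ t) :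
    Tendsto S atTop (𝓝 0) := by
  refine tendsto_order.2 ⟨fun a ha => .of_forall fun t => ha.trans_le (hS t), fun ε hε => ?_⟩
  set δ := ε * γ / 4
  have hδ : 0 < δ := by positivity
  obtain ⟨N, hN⟩ := eventually_atTop.1 (hρ.eventually (eventually_le_nhds hδ))
  have hgeom : ∀ k, S (N + k * T) ≤ (1 - γ) ^ k * S N + δ / γ := by
    have := le_pow_mul_add_div_of_le_mul_add (s := fun k => S (N + k * T)) (sub_nonneg.2 hγ1)
      (by linarith) hδ.le fun k => by
        rw [add_one_mul, ← add_assoc]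
        exact (hwin _).trans (add_le_add le_rfl (hN _ (Nat.le_add_right _ _)))
    simpa using this
  have hpow : Tendsto (fun k => (1 - γ) ^ k * S N) atTop (𝓝 0) := by
    simpa using (tendsto_pow_atTop_nhds_zero_of_lt_one (sub_nonneg.2 hγ1)
      (by linarith)).mul_const (S N)
  obtain ⟨K, hK⟩ := eventually_atTop.1 (hpow.eventually (gt_mem_nhds (half_pos hε)))
  refine eventually_atTop.2 ⟨N + K * T, fun t ht => ?_⟩
  obtain ⟨k, j, hj, rfl⟩ : ∃ k j, j < T ∧ t = N + k * T + j :=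
    ⟨(t - N) / T, (t - N) % T, Nat.mod_lt _ hT, by have := Nat.div_add_mod' (t - N) T; omega⟩
  have hk : K ≤ k := Nat.lt_succ_iff.1 <| Nat.lt_of_mul_lt_mul_right (a := T) <| by
    rw [Nat.succ_mul]; omega
  calc S (N + k * T + j) ≤ S (N + k * T) + ρ (N + k * T) := hstep _ j hj
    _ ≤ (1 - γ) ^ k * S N + δ / γ + δ := add_le_add (hgeom k) (hN _ (Nat.le_add_right _ _))
    _ < ε / 2 + ε / 4 + ε / 4 := by
        have : δ / γ = ε / 4 := by simp only [δ]; field_simp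
        have : δ ≤ ε / 4 := by simp only [δ]; nlinarith
        linarith [hK k hk]
    _ = ε := by ring

section EuclNorm

variable {n : ℕ}

lemma norm_le_euclNorm (v : Fin n → ℝ) : ‖v‖ ≤ euclNorm v :=
  (pi_norm_le_iff_of_nonneg (Real.sqrt_nonneg _)).2 fun i => by
    rw [Real.norm_eq_abs, ← Real.sqrt_sq_eq_abs]
    exact Real.sqrt_le_sqrt (single_le_sum (fun j _ => sq_nonneg (v j)) (mem_univ i))

lemma euclNorm_le_sqrt_mul_norm (v : Fin n → ℝ) : euclNorm v ≤ √n * ‖v‖ :=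
  calc euclNorm v ≤ √(∑ _i : Fin n, ‖v‖ ^ 2) := Real.sqrt_le_sqrt <| sum_le_sum fun i _ => by
        simpa only [Real.norm_eq_abs, sq_abs] using
          pow_le_pow_left₀ (norm_nonneg _) (norm_le_pi_norm v i) 2
    _ = √n * ‖v‖ := by simp [Real.sqrt_mul, Real.sqrt_sq (norm_nonneg v)]

end EuclNorm

theorem stmt4_general {n : ℕ} (β L : ℝ) (hβ : 0 < β)
    (A : ℕ → Matrix (Fin n) (Fin n) ℝ)
    (hstoch : ∀ t, RowStochastic (A t)) (hrooted : ∀ t, BetaRooted β (A t))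
    (q : ℕ → Fin n → ℝ) (hq : ∀ s, StochasticVec (q s))
    (α : ℕ → ℝ) (hα0 : ∀ t, 0 ≤ α t) (hαlim : Tendsto α atTop (nhds 0))
    (d : ℕ → Fin n → ℝ) (hd : ∀ t, euclNorm (d t) ≤ L)
    (x : ℕ → Fin n → ℝ)
    (hdyn : ∀ t, x (t + 1) = (A t).mulVec (x t) - α t • d t) :
    Tendsto (fun t => euclNorm (fun i => x t i - ∑ j, q t j * x t j)) atTop (nhds 0) := by
  rcases isEmpty_or_nonempty (Fin n) with hn | hn
  · simp [euclNorm]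
  have hT : 0 < n * n := by have := Fin.pos_iff_nonempty.2 hn; positivity
  have hβ1 : β ≤ 1 :=
    ((hrooted 0).1 (Classical.arbitrary _)).trans ((hstoch 0).apply_le_one _ _)
  have hnoise : Tendsto (fun u => ‖α u • d u‖) atTop (𝓝 0) := by
    refine squeeze_zero (fun _ => norm_nonneg _) (fun u => ?_) (by simpa using hαlim.mul_const L)
    rw [norm_smul, Real.norm_of_nonneg (hα0 u)]
    exact mul_le_mul_of_nonneg_left ((norm_le_euclNorm _).trans (hd u)) (hα0 u)
  set ρ : ℕ → ℝ := fun t => 2 * ∑ k ∈ range (n * n), ‖α (t + k) • d (t + k)‖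
  have hρ : Tendsto ρ atTop (𝓝 0) := by
    simpa using (tendsto_finsetSum _ fun k _ =>
      hnoise.comp (tendsto_add_atTop_nat k)).const_mul 2
  have hclose : ∀ t, ∀ m ≤ n * n,
      spread (x (t + m)) ≤ spread (windowProd A t m *ᵥ x t) + ρ t := fun t m hm =>
    (spread_le_spread_windowProd_mulVec_add hstoch hdyn t m).trans <| add_le_add le_rfl <|
      mul_le_mul_of_nonneg_left (sum_le_sum_of_subset_of_nonneg (range_mono hm)
        fun _ _ _ => norm_nonneg _) zero_le_two
  have hspread : Tendsto (fun t => spread (x t)) atTop (𝓝 0) :=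
    tendsto_zero_of_window_contraction hT (pow_pos hβ _) (pow_le_one₀ hβ.le hβ1)
      (fun t => spread_nonneg (x t)) hρ
      (fun t => (hclose t _ le_rfl).trans
        (add_le_add (spread_windowProd_mulVec_le hβ.le hstoch hrooted t (x t)) le_rfl))
      (fun t m hm => (hclose t m hm.le).trans
        (add_le_add ((rowStochastic_windowProd hstoch t m).spread_mulVec_le _) le_rfl))
  refine squeeze_zero (fun _ => Real.sqrt_nonneg _) (fun t => (euclNorm_le_sqrt_mul_norm _).trans
    (mul_le_mul_of_nonneg_left ((hq t).norm_sub_dotProduct_le_spread (x t))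
      (Real.sqrt_nonneg _))) ?_
  simpa using hspread.const_mul √n

/-- If the matrices are `β`-rooted and row-stochastic, the gradient perturbations are
bounded by `L`, and the step-sizes go to zero, then `‖x(t) − 𝟏 y(t)‖ → 0`, where
`y(t) = qₜᵀ x(t)`. -/
theorem stmt4 {n : ℕ} (β L : ℝ) (hβ : 0 < β) (hL : 0 < L)
    (A : ℕ → Matrix (Fin n) (Fin n) ℝ)
    (hstoch : ∀ t, RowStochastic (A t)) (hrooted : ∀ t, BetaRooted β (A t))
    (q : ℕ → Fin n → ℝ) (hq : ∀ s, StochasticVec (q s))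
    (hconv : ∀ s i j, Tendsto (fun t => backProd A s t i j) atTop (nhds (q s j)))
    (α : ℕ → ℝ) (hα0 : ∀ t, 0 ≤ α t) (hαlim : Tendsto α atTop (nhds 0))
    (d : ℕ → Fin n → ℝ) (hd : ∀ t, euclNorm (d t) ≤ L)
    (x : ℕ → Fin n → ℝ)
    (hdyn : ∀ t, x (t + 1) = (A t).mulVec (x t) - α t • d t) :
    Tendsto (fun t => euclNorm (fun i => x t i - ∑ j, q t j * x t j)) atTop (nhds 0) :=
  stmt4_general β L hβ A hstoch hrooted q hq α hα0 hαlim d hd x hdyn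
end

section
/- Let n ≥ 2, L > 0, and let f_1, …, f_{n−1} : ℝ → ℝ be convex functions all of whose subgradients are bounded in magnitude by L. Then for every x̄ ∈ ℝ there exists a convex function g : ℝ → ℝ all of whose subgradients are bounded in magnitude by (n−1)L such that x̄ is a global minimizer of the function x ↦ (1/n)(∑_{i=1}^{n−1} f_i(x) + g(x)), i.e., (1/n)(∑_{i=1}^{n−1} f_i(y) + g(y)) ≥ (1/n)(∑_{i=1}^{n−1} f_i(x̄) + g(x̄)) for all y ∈ ℝ. -/
/-- `d` is a subgradient of `f` at `x`. -/
def IsSubgradient (f : ℝ → ℝ) (x d : ℝ) : Prop :=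
  ∀ y, f x + d * (y - x) ≤ f y

/-- All subgradients of `f` are bounded in magnitude by `L`. -/
def HasBoundedSubgradients (f : ℝ → ℝ) (L : ℝ) : Prop :=
  ∀ x d, IsSubgradient f x d → |d| ≤ L

lemma exists_subgrad {f : ℝ → ℝ} (hf : ConvexOn ℝ Set.univ f) (x : ℝ) :
    ∃ d, IsSubgradient f x d := by
  set S : Set ℝ := {s | ∃ y > x, s = (f y - f x) / (y - x)} with hS
  have hne : S.Nonempty := ⟨(f (x+1) - f x) / (x+1-x), ⟨x+1, by linarith, rfl⟩⟩
  have hlb : ∀ y < x, (f x - f y) / (x - y) ∈ lowerBounds S := by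
    rintro y hy s ⟨z, hz, rfl⟩
    exact hf.slope_mono_adjacent trivial trivial hy hz
  have hbdd : BddBelow S := ⟨_, hlb (x-1) (by linarith)⟩
  refine ⟨sInf S, fun y => ?_⟩
  rcases lt_trichotomy y x with h | h | h
  · have h1 : (f x - f y) / (x - y) ≤ sInf S := le_csInf hne (hlb y h)
    have h2 : 0 < x - y := by linarith
    rw [div_le_iff₀ h2] at h1
    nlinarith [h1]
  · simp [h]
  · have h1 : sInf S ≤ (f y - f x) / (y - x) := csInf_le hbdd ⟨y, h, rfl⟩
    have h2 : 0 < y - x := by linarith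
    rw [le_div_iff₀ h2] at h1
    linarith

/-- Fundamental limitation: given convex functions `f₁, …, f_{n-1}` with subgradients
bounded by `L`, for every target value `x̄` there is a convex function `g` with
subgradients bounded by `(n-1)L` such that `x̄` minimizes
`x ↦ (1/n)(∑ᵢ fᵢ(x) + g(x))`. -/
theorem stmt8 (n : ℕ) (hn : 2 ≤ n) (L : ℝ) (hL : 0 < L)
    (f : Fin (n - 1) → ℝ → ℝ)
    (hconv : ∀ i, ConvexOn ℝ Set.univ (f i))
    (hbdd : ∀ i, HasBoundedSubgradients (f i) L)
    (xbar : ℝ) :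
    ∃ g : ℝ → ℝ, ConvexOn ℝ Set.univ g ∧
      HasBoundedSubgradients g (((n : ℝ) - 1) * L) ∧
      ∀ y : ℝ, (1 / (n : ℝ)) * ((∑ i, f i xbar) + g xbar) ≤
        (1 / (n : ℝ)) * ((∑ i, f i y) + g y) := by
  choose d hd using fun i => exists_subgrad (hconv i) xbar
  set s : ℝ := ∑ i, d i with hs
  refine ⟨fun y => s * (xbar - y), ?_, ?_, ?_⟩
  · -- convexity of an affine function
    constructor
    · exact convex_univ
    · intro x _ y _ a b _ _ hab
      simp only [smul_eq_mul]
      have : s * xbar * a + s * xbar * b = s * xbar := by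
        rw [← mul_add, hab, mul_one]
      nlinarith [this]
  · intro x e he
    have key : e = -s := by
      have h1 := he (x + 1)
      have h2 := he (x - 1)
      simp only at h1 h2
      nlinarith
    rw [key, abs_neg]
    have h1 : |s| ≤ ∑ i : Fin (n-1), |d i| := Finset.abs_sum_le_sum_abs _ _
    have h2 : ∑ i : Fin (n-1), |d i| ≤ ∑ _i : Fin (n-1), L :=
      Finset.sum_le_sum fun i _ => hbdd i xbar (d i) (hd i)
    have h3 : (∑ _i : Fin (n-1), L) = ((n - 1 : ℕ) : ℝ) * L := by
      simp [Finset.sum_const, Finset.card_univ]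
    have h4 : ((n - 1 : ℕ) : ℝ) = (n : ℝ) - 1 := by
      have : 1 ≤ n := by omega
      push_cast [Nat.cast_sub this]; ring
    rw [h3, h4] at h2
    linarith
  · intro y
    have hsum : (∑ i, f i xbar) + s * (y - xbar) ≤ ∑ i, f i y := by
      have : ∑ i, (f i xbar + d i * (y - xbar)) ≤ ∑ i, f i y :=
        Finset.sum_le_sum fun i _ => hd i y
      rw [Finset.sum_add_distrib, ← Finset.sum_mul] at this
      exact this
    have hn0 : (0:ℝ) ≤ 1 / (n:ℝ) := by positivity
    apply mul_le_mul_of_nonneg_left _ hn0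
    have hr : s * (xbar - y) = -(s * (y - xbar)) := by ring
    simp only
    linarith [hsum, hr]
end

section
/- Let F ∈ ℕ, let i be a vertex of a directed graph with in-neighborhood N⁻(i), let B ⊆ N⁻(i) with |B| ≤ F (the adversarial in-neighbors of i, with i itself not adversarial), and let ξ : {i} ∪ N⁻(i) → ℝ be an assignment of values. Let J ⊆ N⁻(i) be any admissible LF-retained set with parameter F for the values ξ relative to ξ_i. Then for every j ∈ {i} ∪ J, min_{k ∈ ({i}∪N⁻(i))∖B} ξ_k ≤ ξ_j ≤ max_{k ∈ ({i}∪N⁻(i))∖B} ξ_k; that is, every value retained by the filtering (including i's own value) lies between the smallest and largest non-adversarial values in i's closed in-neighborhood. -/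
open scoped Classical

/-- `J` is an admissible LF-retained set with parameter `F` for the values `ξ` on the
in-neighborhood `N`, relative to the node's own value `xi`:  `J = N \ (H ∪ L)` where `H`
consists of (at most) the `F` largest received values strictly greater than `xi` (all of
them if there are fewer than `F`), and symmetrically `L` consists of (at most) the `F`
smallest received values strictly less than `xi`. -/
def IsLFRetained {ι : Type*} [DecidableEq ι] (F : ℕ) (N : Finset ι) (ξ : ι → ℝ)
    (xi : ℝ) (J : Finset ι) : Prop :=
  ∃ H L : Finset ι,
    J = N \ (H ∪ L) ∧
    H ⊆ N.filter (fun j => xi < ξ j) ∧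
    (∀ j ∈ H, ∀ k ∈ (N.filter (fun j => xi < ξ j)) \ H, ξ k ≤ ξ j) ∧
    ((N.filter (fun j => xi < ξ j)).card ≤ F → H = N.filter (fun j => xi < ξ j)) ∧
    (F < (N.filter (fun j => xi < ξ j)).card → H.card = F) ∧
    L ⊆ N.filter (fun j => ξ j < xi) ∧
    (∀ j ∈ L, ∀ k ∈ (N.filter (fun j => ξ j < xi)) \ L, ξ j ≤ ξ k) ∧
    ((N.filter (fun j => ξ j < xi)).card ≤ F → L = N.filter (fun j => ξ j < xi)) ∧
    (F < (N.filter (fun j => ξ j < xi)).card → L.card = F)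

/-- Every value retained by the LF filtering at a node `i` (including `i`'s own value)
lies between the smallest and largest non-adversarial values in `i`'s closed
in-neighborhood, provided the adversarial in-neighbors `B` number at most `F`. -/
theorem stmt9 {ι : Type*} [DecidableEq ι] (F : ℕ) (i : ι) (N : Finset ι) (hiN : i ∉ N)
    (B : Finset ι) (hBN : B ⊆ N) (hBcard : B.card ≤ F)
    (ξ : ι → ℝ) (J : Finset ι) (hJ : IsLFRetained F N ξ (ξ i) J) :
    ∀ j ∈ insert i J,
      ((insert i N) \ B).inf'
          ⟨i, Finset.mem_sdiff.mpr ⟨Finset.mem_insert_self i N, fun h => hiN (hBN h)⟩⟩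
          ξ ≤ ξ j ∧
      ξ j ≤ ((insert i N) \ B).sup'
          ⟨i, Finset.mem_sdiff.mpr ⟨Finset.mem_insert_self i N, fun h => hiN (hBN h)⟩⟩
          ξ := by
  intro j hj
  obtain ⟨H, L, hJeq, hHsub, hHmax, hHall, hHcard, hLsub, hLmin, hLall, hLcard⟩ := hJ
  have hiS : i ∈ (insert i N) \ B :=
    Finset.mem_sdiff.mpr ⟨Finset.mem_insert_self i N, fun h => hiN (hBN h)⟩
  set S := (insert i N) \ B with hS
  have hne : S.Nonempty := ⟨i, hiS⟩
  have hinf_i : S.inf' ⟨i, hiS⟩ ξ ≤ ξ i := Finset.inf'_le _ hiS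
  have hsup_i : ξ i ≤ S.sup' ⟨i, hiS⟩ ξ := Finset.le_sup' _ hiS
  rcases Finset.mem_insert.mp hj with rfl | hjJ
  · exact ⟨hinf_i, hsup_i⟩
  · rw [hJeq, Finset.mem_sdiff, Finset.mem_union] at hjJ
    obtain ⟨hjN, hjHL⟩ := hjJ
    have hjH : j ∉ H := fun h => hjHL (Or.inl h)
    have hjL : j ∉ L := fun h => hjHL (Or.inr h)
    constructor
    · -- inf side
      by_cases hlt : ξ j < ξ i
      · have hjA : j ∈ N.filter (fun k => ξ k < ξ i) := Finset.mem_filter.mpr ⟨hjN, hlt⟩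
        by_cases hjB : j ∈ B
        · have hLc : L.card = F := by
            apply hLcard
            by_contra hle
            push_neg at hle
            exact hjL (hLall hle ▸ hjA)
          have : ¬ L ⊆ B := by
            intro hsub
            have : (insert j L).card ≤ B.card :=
              Finset.card_le_card (Finset.insert_subset hjB hsub)
            rw [Finset.card_insert_of_notMem hjL, hLc] at this
            omega
          obtain ⟨l, hlL, hlB⟩ := Finset.not_subset.mp this
          have hlN : l ∈ N := Finset.mem_filter.mp (hLsub hlL) |>.1
          have hlS : l ∈ S := Finset.mem_sdiff.mpr ⟨Finset.mem_insert_of_mem hlN, hlB⟩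
          calc S.inf' ⟨i, hiS⟩ ξ ≤ ξ l := Finset.inf'_le _ hlS
            _ ≤ ξ j := hLmin l hlL j (Finset.mem_sdiff.mpr ⟨hjA, hjL⟩)
        · exact Finset.inf'_le _ (Finset.mem_sdiff.mpr ⟨Finset.mem_insert_of_mem hjN, hjB⟩)
      · exact le_trans hinf_i (not_lt.mp hlt)
    · -- sup side
      by_cases hlt : ξ i < ξ j
      · have hjA : j ∈ N.filter (fun k => ξ i < ξ k) := Finset.mem_filter.mpr ⟨hjN, hlt⟩
        by_cases hjB : j ∈ B
        · have hHc : H.card = F := by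
            apply hHcard
            by_contra hle
            push_neg at hle
            exact hjH (hHall hle ▸ hjA)
          have : ¬ H ⊆ B := by
            intro hsub
            have : (insert j H).card ≤ B.card :=
              Finset.card_le_card (Finset.insert_subset hjB hsub)
            rw [Finset.card_insert_of_notMem hjH, hHc] at this
            omega
          obtain ⟨h, hhH, hhB⟩ := Finset.not_subset.mp this
          have hhN : h ∈ N := Finset.mem_filter.mp (hHsub hhH) |>.1
          have hhS : h ∈ S := Finset.mem_sdiff.mpr ⟨Finset.mem_insert_of_mem hhN, hhB⟩
          calc ξ j ≤ ξ h := hHmax h hhH j (Finset.mem_sdiff.mpr ⟨hjA, hjH⟩)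
            _ ≤ S.sup' ⟨i, hiS⟩ ξ := Finset.le_sup' _ hhS
        · exact Finset.le_sup' _ (Finset.mem_sdiff.mpr ⟨Finset.mem_insert_of_mem hjN, hjB⟩)
      · exact le_trans (not_lt.mp hlt) hsup_i
end

section
/- Let F ∈ ℕ, η > 0, let i be a vertex of a directed graph with in-neighborhood N⁻(i) satisfying |N⁻(i)| ≥ 2F+1, let B ⊆ N⁻(i) with |B| ≤ F (the adversarial in-neighbors of i, with i itself not adversarial), and let ξ : {i} ∪ N⁻(i) → ℝ be an assignment of values. Let J ⊆ N⁻(i) be an admissible LF-retained set with parameter F for ξ relative to ξ_i, and let a : {i} ∪ J → ℝ be weights with a_j ≥ η for all j ∈ {i} ∪ J and a_i + ∑_{j∈J} a_j = 1. Then there exist nonnegative weights ā : {i} ∪ (N⁻(i)∖B) → ℝ such that: (1) ā_i + ∑_{j ∈ N⁻(i)∖B} ā_j = 1; (2) ā_i ≥ η and at least |N⁻(i)| − 2F of the weights ā_j with j ∈ N⁻(i)∖B satisfy ā_j ≥ η/2; and (3) ā_i ξ_i + ∑_{j ∈ N⁻(i)∖B} ā_j ξ_j = a_i ξ_i + ∑_{j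 ∈ J} a_j ξ_j. -/
open scoped Classical

/-- The LF-filtered convex-combination update of a regular node `i` (with weights lower
bounded by `η`, at most `F` adversarial in-neighbors `B`, and at least `2F+1`
in-neighbors) is mathematically equivalent to a convex combination involving only
non-adversarial values, with `ā_i ≥ η` and at least `|N⁻(i)| − 2F` of the other weights
lower bounded by `η/2`. -/
theorem stmt10 {ι : Type*} [DecidableEq ι] (F : ℕ) (η : ℝ) (hη : 0 < η)
    (i : ι) (N : Finset ι) (hiN : i ∉ N) (hNcard : 2 * F + 1 ≤ N.card)
    (B : Finset ι) (hBN : B ⊆ N) (hBcard : B.card ≤ F)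
    (ξ : ι → ℝ) (J : Finset ι) (hJ : IsLFRetained F N ξ (ξ i) J)
    (a : ι → ℝ) (ha : ∀ j ∈ insert i J, η ≤ a j)
    (hsum : a i + ∑ j ∈ J, a j = 1) :
    ∃ abar : ι → ℝ,
      (∀ j ∈ insert i (N \ B), 0 ≤ abar j) ∧
      abar i + ∑ j ∈ N \ B, abar j = 1 ∧
      η ≤ abar i ∧
      N.card - 2 * F ≤ ((N \ B).filter (fun j => η / 2 ≤ abar j)).card ∧
      abar i * ξ i + ∑ j ∈ N \ B, abar j * ξ j = a i * ξ i + ∑ j ∈ J, a j * ξ j := by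
  classical
  obtain ⟨H, L, hJdef, hHsub, hHmax, hHall, hHF, hLsub, hLmin, hLall, hLF⟩ := hJ
  have hHN : H ⊆ N := fun x hx => (Finset.mem_filter.mp (hHsub hx)).1
  have hLN : L ⊆ N := fun x hx => (Finset.mem_filter.mp (hLsub hx)).1
  have hHi : ∀ h ∈ H, ξ i < ξ h := fun h hh => (Finset.mem_filter.mp (hHsub hh)).2
  have hLi : ∀ l ∈ L, ξ l < ξ i := fun l hl => (Finset.mem_filter.mp (hLsub hl)).2
  have hJN : J ⊆ N := by rw [hJdef]; exact Finset.sdiff_subset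
  have hJH : ∀ x ∈ J, x ∉ H := by
    intro x hx hxH
    rw [hJdef, Finset.mem_sdiff] at hx
    exact hx.2 (Finset.mem_union_left _ hxH)
  have hJL : ∀ x ∈ J, x ∉ L := by
    intro x hx hxL
    rw [hJdef, Finset.mem_sdiff] at hx
    exact hx.2 (Finset.mem_union_right _ hxL)
  have KH : ∀ j ∈ J, ∀ h ∈ H, ξ j ≤ ξ h := by
    intro j hj h hh
    by_cases hij : ξ i < ξ j
    · exact hHmax h hh j
        (Finset.mem_sdiff.mpr ⟨Finset.mem_filter.mpr ⟨hJN hj, hij⟩, hJH j hj⟩)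
    · linarith [hHi h hh, not_lt.mp hij]
  have KL : ∀ j ∈ J, ∀ l ∈ L, ξ l ≤ ξ j := by
    intro j hj l hl
    by_cases hij : ξ j < ξ i
    · exact hLmin l hl j
        (Finset.mem_sdiff.mpr ⟨Finset.mem_filter.mpr ⟨hJN hj, hij⟩, hJL j hj⟩)
    · linarith [hLi l hl, not_lt.mp hij]
  have hHfull : ∀ j ∈ J, ξ i < ξ j → H.card = F := by
    intro j hj hij
    rcases le_or_gt (N.filter (fun j => ξ i < ξ j)).card F with h | h
    · exact absurd (by rw [hHall h]; exact Finset.mem_filter.mpr ⟨hJN hj, hij⟩) (hJH j hj)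
    · exact hHF h
  have hLfull : ∀ j ∈ J, ξ j < ξ i → L.card = F := by
    intro j hj hij
    rcases le_or_gt (N.filter (fun j => ξ j < ξ i)).card F with h | h
    · exact absurd (by rw [hLall h]; exact Finset.mem_filter.mpr ⟨hJN hj, hij⟩) (hJL j hj)
    · exact hLF h
  have hHleF : H.card ≤ F := by
    rcases le_or_gt (N.filter (fun j => ξ i < ξ j)).card F with h | h
    · rw [hHall h]; exact h
    · exact le_of_eq (hHF h)
  have hLleF : L.card ≤ F := by
    rcases le_or_gt (N.filter (fun j => ξ j < ξ i)).card F with h | h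
    · rw [hLall h]; exact h
    · exact le_of_eq (hLF h)
  set K := J ∩ B with hKdef
  have hKJ : K ⊆ J := Finset.inter_subset_left
  have hKB : K ⊆ B := Finset.inter_subset_right
  have hHBK : (H ∩ B).card + K.card ≤ B.card := by
    rw [← Finset.card_union_of_disjoint (by
      rw [Finset.disjoint_left]
      intro x hx hx'
      exact hJH x (hKJ hx') (Finset.mem_of_mem_inter_left hx))]
    exact Finset.card_le_card (Finset.union_subset Finset.inter_subset_right hKB)
  have hLBK : (L ∩ B).card + K.card ≤ B.card := by
    rw [← Finset.card_union_of_disjoint (by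
      rw [Finset.disjoint_left]
      intro x hx hx'
      exact hJL x (hKJ hx') (Finset.mem_of_mem_inter_left hx))]
    exact Finset.card_le_card (Finset.union_subset Finset.inter_subset_right hKB)
  have hHBc : (H \ B).card + (H ∩ B).card = H.card := Finset.card_sdiff_add_card_inter H B
  have hLBc : (L \ B).card + (L ∩ B).card = L.card := Finset.card_sdiff_add_card_inter L B
  set D := H.card + L.card + K.card - 2 * F with hDdef
  have hDK : D ≤ K.card := by omega
  have hDH : D ≤ (H \ B).card := by omega
  have hDL : D ≤ (L \ B).card := by omega
  obtain ⟨S, hSK, hScard⟩ := Finset.exists_subset_card_eq hDK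
  obtain ⟨SL, hSLsub, hSLcard⟩ := Finset.exists_subset_card_eq hDL
  obtain ⟨SH, hSHsub, hSHcard⟩ := Finset.exists_subset_card_eq hDH
  have hSLH : ∀ x, x ∈ SL → x ∉ SH := by
    intro x hx hx'
    have h1 : x ∈ L := (Finset.mem_sdiff.mp (hSLsub hx)).1
    have h2 : x ∈ H := (Finset.mem_sdiff.mp (hSHsub hx')).1
    linarith [hHi x h2, hLi x h1]
  set X := insert i (N \ B) with hXdef
  have hiNB : i ∉ N \ B := fun h => hiN (Finset.mem_sdiff.mp h).1
  have hJBsub : J \ B ⊆ N \ B := fun x hx =>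
    Finset.mem_sdiff.mpr ⟨hJN (Finset.mem_sdiff.mp hx).1, (Finset.mem_sdiff.mp hx).2⟩
  have hJBX : J \ B ⊆ X := fun x hx => Finset.mem_insert_of_mem (hJBsub hx)
  have hLBX : L \ B ⊆ X := fun x hx => Finset.mem_insert_of_mem
    (Finset.mem_sdiff.mpr ⟨hLN (Finset.mem_sdiff.mp hx).1, (Finset.mem_sdiff.mp hx).2⟩)
  have hHBX : H \ B ⊆ X := fun x hx => Finset.mem_insert_of_mem
    (Finset.mem_sdiff.mpr ⟨hHN (Finset.mem_sdiff.mp hx).1, (Finset.mem_sdiff.mp hx).2⟩)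
  have hKone : ∀ j ∈ K, 1 ≤ K.card := fun j hj => Finset.card_pos.mpr ⟨j, hj⟩
  -- construct p and q
  obtain ⟨p, q, hp, hq, hpSL, hqSH, hpinj, hqinj⟩ :
      ∃ p q : ι → ι,
        (∀ j ∈ K, ξ (p j) ≤ ξ j ∧ p j ∈ X) ∧
        (∀ j ∈ K, ξ j ≤ ξ (q j) ∧ q j ∈ X) ∧
        (∀ j ∈ S, p j ∈ SL) ∧ (∀ j ∈ S, q j ∈ SH) ∧
        Set.InjOn p ↑S ∧ Set.InjOn q ↑S := by
    have eL : {x // x ∈ S} ≃ {x // x ∈ SL} := Finset.equivOfCardEq (by rw [hScard, hSLcard])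
    have eH : {x // x ∈ S} ≃ {x // x ∈ SH} := Finset.equivOfCardEq (by rw [hScard, hSHcard])
    set l0 : ι := if h : (L \ B).Nonempty then h.choose else i with hl0def
    set h0 : ι := if h : (H \ B).Nonempty then h.choose else i with hh0def
    have hl0 : (L \ B).Nonempty → l0 ∈ L \ B := by
      intro h; rw [hl0def, dif_pos h]; exact h.choose_spec
    have hh0 : (H \ B).Nonempty → h0 ∈ H \ B := by
      intro h; rw [hh0def, dif_pos h]; exact h.choose_spec
    refine ⟨fun j => if hj : j ∈ S then ((eL ⟨j, hj⟩ : {x // x ∈ SL}) : ι)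
        else if ξ j < ξ i then l0 else i,
      fun j => if hj : j ∈ S then ((eH ⟨j, hj⟩ : {x // x ∈ SH}) : ι)
        else if ξ i < ξ j then h0 else i, ?_, ?_, ?_, ?_, ?_, ?_⟩
    · intro j hj
      beta_reduce
      by_cases hjS : j ∈ S
      · rw [dif_pos hjS]
        have h1 : ((eL ⟨j, hjS⟩ : {x // x ∈ SL}) : ι) ∈ SL := (eL ⟨j, hjS⟩).2
        have h2 : ((eL ⟨j, hjS⟩ : {x // x ∈ SL}) : ι) ∈ L := (Finset.mem_sdiff.mp (hSLsub h1)).1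
        exact ⟨KL j (hKJ hj) _ h2, hLBX (hSLsub h1)⟩
      · rw [dif_neg hjS]
        by_cases hij : ξ j < ξ i
        · rw [if_pos hij]
          have hne : (L \ B).Nonempty := by
            rw [← Finset.card_pos]
            have := hLfull j (hKJ hj) hij
            have := hKone j hj
            omega
          have h2 := hl0 hne
          exact ⟨KL j (hKJ hj) _ (Finset.mem_sdiff.mp h2).1, hLBX h2⟩
        · rw [if_neg hij]
          exact ⟨not_lt.mp hij, Finset.mem_insert_self i _⟩
    · intro j hj
      beta_reduce
      by_cases hjS : j ∈ S
      · rw [dif_pos hjS]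
        have h1 : ((eH ⟨j, hjS⟩ : {x // x ∈ SH}) : ι) ∈ SH := (eH ⟨j, hjS⟩).2
        have h2 : ((eH ⟨j, hjS⟩ : {x // x ∈ SH}) : ι) ∈ H := (Finset.mem_sdiff.mp (hSHsub h1)).1
        exact ⟨KH j (hKJ hj) _ h2, hHBX (hSHsub h1)⟩
      · rw [dif_neg hjS]
        by_cases hij : ξ i < ξ j
        · rw [if_pos hij]
          have hne : (H \ B).Nonempty := by
            rw [← Finset.card_pos]
            have := hHfull j (hKJ hj) hij
            have := hKone j hj
            omega
          have h2 := hh0 hne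
          exact ⟨KH j (hKJ hj) _ (Finset.mem_sdiff.mp h2).1, hHBX h2⟩
        · rw [if_neg hij]
          exact ⟨not_lt.mp hij, Finset.mem_insert_self i _⟩
    · intro j hj; beta_reduce; rw [dif_pos hj]; exact (eL ⟨j, hj⟩).2
    · intro j hj; beta_reduce; rw [dif_pos hj]; exact (eH ⟨j, hj⟩).2
    · intro j hj j' hj' heq
      rw [Finset.mem_coe] at hj hj'
      beta_reduce at heq
      rw [dif_pos hj, dif_pos hj'] at heq
      have := eL.injective (Subtype.coe_injective heq)
      exact congrArg Subtype.val this
    · intro j hj j' hj' heq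
      rw [Finset.mem_coe] at hj hj'
      beta_reduce at heq
      rw [dif_pos hj, dif_pos hj'] at heq
      have := eH.injective (Subtype.coe_injective heq)
      exact congrArg Subtype.val this
  -- construct θ
  obtain ⟨θ, hθ⟩ :
      ∃ θ : ι → ℝ, ∀ j ∈ K,
        0 ≤ θ j ∧ θ j ≤ 1 ∧ ξ j = θ j * ξ (p j) + (1 - θ j) * ξ (q j) := by
    refine ⟨fun j => if ξ (p j) < ξ (q j) then (ξ (q j) - ξ j) / (ξ (q j) - ξ (p j))
      else 1 / 2, ?_⟩
    intro j hj
    beta_reduce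
    have h1 := (hp j hj).1
    have h2 := (hq j hj).1
    by_cases hlt : ξ (p j) < ξ (q j)
    · rw [if_pos hlt]
      have hne : ξ (q j) - ξ (p j) ≠ 0 := by linarith
      refine ⟨div_nonneg (by linarith) (by linarith), ?_, ?_⟩
      · rw [div_le_one (by linarith)]; linarith
      · field_simp
        ring
    · rw [if_neg hlt]
      have h3 : ξ (q j) ≤ ξ (p j) := not_lt.mp hlt
      refine ⟨by norm_num, by norm_num, by linarith⟩
  have haJ : ∀ j ∈ J, (0:ℝ) ≤ a j := fun j hj =>
    le_trans hη.le (ha j (Finset.mem_insert_of_mem hj))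
  have hai : (0:ℝ) ≤ a i := le_trans hη.le (ha i (Finset.mem_insert_self i J))
  -- the new weights
  set A : ι → ℝ := fun x => (if x = i then a i else 0) + (if x ∈ J \ B then a x else 0) +
      ∑ j ∈ K, ((if p j = x then a j * θ j else 0) + (if q j = x then a j * (1 - θ j) else 0))
    with hAdef
  have hcnn : ∀ x, ∀ j ∈ K, 0 ≤ (if p j = x then a j * θ j else 0) +
      (if q j = x then a j * (1 - θ j) else 0) := by
    intro x j hj
    have h0 := haJ j (hKJ hj)
    obtain ⟨ht1, ht2, _⟩ := hθ j hj
    apply add_nonneg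
    · split_ifs
      · exact mul_nonneg h0 ht1
      · exact le_refl 0
    · split_ifs
      · exact mul_nonneg h0 (by linarith)
      · exact le_refl 0
  have hAnn : ∀ x, 0 ≤ A x := by
    intro x
    simp only [hAdef]
    apply add_nonneg (add_nonneg ?_ ?_) (Finset.sum_nonneg (hcnn x))
    · split_ifs <;> simp [hai]
    · split_ifs with h
      · exact haJ x (Finset.mem_sdiff.mp h).1
      · exact le_refl 0
  have hAlow : ∀ x ∈ J \ B, a x ≤ A x := by
    intro x hx
    simp only [hAdef]
    rw [if_pos hx]
    have h1 : (0:ℝ) ≤ if x = i then a i else 0 := by split_ifs <;> simp [hai]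
    have h2 := Finset.sum_nonneg (hcnn x)
    linarith
  have hAi : a i ≤ A i := by
    have hni : i ∉ J \ B := fun h => hiN (hJN (Finset.mem_sdiff.mp h).1)
    simp only [hAdef]
    simp only [eq_self_iff_true, if_true, if_neg hni]
    linarith [Finset.sum_nonneg (hcnn i)]
  have hsumsplit : ∑ x ∈ K, a x + ∑ x ∈ J \ B, a x = ∑ x ∈ J, a x :=
    Finset.sum_inter_add_sum_sdiff J B a
  have hsumsplitξ : ∑ x ∈ K, a x * ξ x + ∑ x ∈ J \ B, a x * ξ x = ∑ x ∈ J, a x * ξ x :=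
    Finset.sum_inter_add_sum_sdiff J B (fun x => a x * ξ x)
  -- total sum
  have key1 : ∑ x ∈ X, A x = 1 := by
    simp only [hAdef]
    rw [Finset.sum_add_distrib, Finset.sum_add_distrib]
    rw [Finset.sum_ite_eq' X i (fun _ => a i), if_pos (Finset.mem_insert_self i _)]
    rw [Finset.sum_ite_mem X (J \ B) a, Finset.inter_eq_right.mpr hJBX]
    rw [Finset.sum_comm]
    have hinner : ∀ j ∈ K, (∑ x ∈ X, ((if p j = x then a j * θ j else 0) +
        (if q j = x then a j * (1 - θ j) else 0))) = a j := by
      intro j hj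
      rw [Finset.sum_add_distrib, Finset.sum_ite_eq X (p j) (fun _ => a j * θ j),
        Finset.sum_ite_eq X (q j) (fun _ => a j * (1 - θ j)),
        if_pos (hp j hj).2, if_pos (hq j hj).2]
      ring
    rw [Finset.sum_congr rfl hinner]
    linarith
  have key2 : ∑ x ∈ X, A x * ξ x = a i * ξ i + ∑ j ∈ J, a j * ξ j := by
    simp only [hAdef]
    simp only [add_mul, Finset.sum_mul, ite_mul, zero_mul]
    rw [Finset.sum_add_distrib, Finset.sum_add_distrib]
    rw [Finset.sum_ite_eq' X i (fun x => a i * ξ x), if_pos (Finset.mem_insert_self i _)]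
    rw [Finset.sum_ite_mem X (J \ B) (fun x => a x * ξ x), Finset.inter_eq_right.mpr hJBX]
    rw [Finset.sum_comm]
    have hinner : ∀ j ∈ K, (∑ x ∈ X, ((if p j = x then a j * θ j * ξ x else 0) +
        (if q j = x then a j * (1 - θ j) * ξ x else 0))) = a j * ξ j := by
      intro j hj
      rw [Finset.sum_add_distrib, Finset.sum_ite_eq X (p j) (fun x => a j * θ j * ξ x),
        Finset.sum_ite_eq X (q j) (fun x => a j * (1 - θ j) * ξ x),
        if_pos (hp j hj).2, if_pos (hq j hj).2]
      rw [(hθ j hj).2.2]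
      ring
    rw [Finset.sum_congr rfl hinner]
    linarith
  have hAge : ∀ x, ∀ j ∈ K, (if p j = x then a j * θ j else 0) +
      (if q j = x then a j * (1 - θ j) else 0) ≤ A x := by
    intro x j hj
    simp only [hAdef]
    have h1 : (0:ℝ) ≤ if x = i then a i else 0 := by split_ifs <;> simp [hai]
    have h2 : (0:ℝ) ≤ if x ∈ J \ B then a x else 0 := by
      split_ifs with h
      · exact haJ x (Finset.mem_sdiff.mp h).1
      · exact le_refl 0
    have h3 := Finset.single_le_sum (fun j' hj' => hcnn x j' hj') hj
    linarith
  have hcount : N.card - 2 * F ≤ ((N \ B).filter (fun x => η / 2 ≤ A x)).card := by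
    set w : ι → ι := fun j => if 1 / 2 ≤ θ j then p j else q j with hwdef
    have hwc : ∀ j, w j = if 1 / 2 ≤ θ j then p j else q j := fun j => rfl
    have hwmem : ∀ j ∈ S, w j ∈ (N \ B).filter (fun x => η / 2 ≤ A x) := by
      intro j hj
      have hjK : j ∈ K := hSK hj
      have haj : η ≤ a j := ha j (Finset.mem_insert_of_mem (hKJ hjK))
      obtain ⟨ht1, ht2, _⟩ := hθ j hjK
      have hpNB : p j ∈ N \ B := by
        have h := hSLsub (hpSL j hj)
        exact Finset.mem_sdiff.mpr
          ⟨hLN (Finset.mem_sdiff.mp h).1, (Finset.mem_sdiff.mp h).2⟩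
      have hqNB : q j ∈ N \ B := by
        have h := hSHsub (hqSH j hj)
        exact Finset.mem_sdiff.mpr
          ⟨hHN (Finset.mem_sdiff.mp h).1, (Finset.mem_sdiff.mp h).2⟩
      rw [Finset.mem_filter]
      by_cases hhalf : 1 / 2 ≤ θ j
      · have hwj : w j = p j := by rw [hwc, if_pos hhalf]
        rw [hwj]
        refine ⟨hpNB, ?_⟩
        beta_reduce
        refine le_trans ?_ (hAge (p j) j hjK)
        rw [if_pos rfl]
        have h2 : (0:ℝ) ≤ if q j = p j then a j * (1 - θ j) else 0 := by
          split_ifs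
          · exact mul_nonneg (haJ j (hKJ hjK)) (by linarith)
          · exact le_refl 0
        nlinarith
      · have hwj : w j = q j := by rw [hwc, if_neg hhalf]
        rw [hwj]
        refine ⟨hqNB, ?_⟩
        beta_reduce
        refine le_trans ?_ (hAge (q j) j hjK)
        rw [if_pos rfl]
        push_neg at hhalf
        have h2 : (0:ℝ) ≤ if p j = q j then a j * θ j else 0 := by
          split_ifs
          · exact mul_nonneg (haJ j (hKJ hjK)) ht1
          · exact le_refl 0
        nlinarith
    have hwinj : Set.InjOn w ↑S := by
      intro j hj j' hj' heq
      rw [Finset.mem_coe] at hj hj'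
      rw [hwc j, hwc j'] at heq
      split_ifs at heq with h1 h2 h2
      · exact hpinj hj hj' heq
      · exact absurd (heq ▸ hpSL j hj) (fun hh => hSLH _ hh (hqSH j' hj'))
      · exact absurd (heq.symm ▸ hqSH j hj) (fun hh => hSLH _ (hpSL j' hj') hh)
      · exact hqinj hj hj' heq
    have hWsub : S.image w ∪ (J \ B) ⊆ (N \ B).filter (fun x => η / 2 ≤ A x) := by
      intro x hx
      rcases Finset.mem_union.mp hx with hx | hx
      · obtain ⟨j, hj, rfl⟩ := Finset.mem_image.mp hx
        exact hwmem j hj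
      · rw [Finset.mem_filter]
        refine ⟨hJBsub hx, ?_⟩
        beta_reduce
        have h1 : η ≤ a x := ha x (Finset.mem_insert_of_mem (Finset.mem_sdiff.mp hx).1)
        have h2 : a x ≤ A x := hAlow x hx
        exact le_trans (le_trans (by linarith : η/2 ≤ η) h1) h2
    have hWdisj : Disjoint (S.image w) (J \ B) := by
      rw [Finset.disjoint_left]
      intro x hx hx'
      obtain ⟨j, hj, rfl⟩ := Finset.mem_image.mp hx
      have hxJ : w j ∈ J := (Finset.mem_sdiff.mp hx').1
      rw [hwc j] at hxJ
      by_cases hhalf : 1 / 2 ≤ θ j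
      · rw [if_pos hhalf] at hxJ
        exact hJL _ hxJ (Finset.mem_sdiff.mp (hSLsub (hpSL j hj))).1
      · rw [if_neg hhalf] at hxJ
        exact hJH _ hxJ (Finset.mem_sdiff.mp (hSHsub (hqSH j hj))).1
    have hcard1 : (S.image w ∪ (J \ B)).card = D + (J \ B).card := by
      rw [Finset.card_union_of_disjoint hWdisj, Finset.card_image_of_injOn hwinj, hScard]
    have hcard2 : (J \ B).card + K.card = J.card := by
      rw [← Finset.sdiff_inter_self_left J B]
      exact Finset.card_sdiff_add_card_eq_card Finset.inter_subset_left
    have hcard3 : J.card + (H.card + L.card) = N.card := by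
      have hdisj : Disjoint H L := by
        rw [Finset.disjoint_left]
        intro x hx hx'
        linarith [hHi x hx, hLi x hx']
      have hsub : H ∪ L ⊆ N := Finset.union_subset hHN hLN
      rw [hJdef]
      rw [← Finset.card_union_of_disjoint hdisj]
      exact Finset.card_sdiff_add_card_eq_card hsub
    have hle := Finset.card_le_card hWsub
    omega
  have e1 : ∑ x ∈ X, A x = A i + ∑ x ∈ N \ B, A x := Finset.sum_insert hiNB
  have e2 : ∑ x ∈ X, A x * ξ x = A i * ξ i + ∑ x ∈ N \ B, A x * ξ x :=
    Finset.sum_insert hiNB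
  exact ⟨A, fun j _ => hAnn j, by rw [← e1] ; exact key1,
    le_trans (ha i (Finset.mem_insert_self i J)) hAi, hcount, by rw [← e2]; exact key2⟩
end

section
/- Let F ∈ ℕ and let G = (V, E) be a directed graph on a finite vertex set that is (2F+1)-robust. Let A ⊆ V be an F-local set, let R = V ∖ A be nonempty, and suppose that for each v ∈ R a set J(v) ⊆ N⁻(v) ∩ R of retained in-neighbors is given with |N⁻(v) ∖ J(v)| ≤ 2F. Then the directed graph on vertex set R with an edge from u to v whenever u ∈ J(v) is rooted. -/
open scoped Classical

/-- The in-neighborhood of `v` in the directed graph with edge relation `E`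
(`E u v` means there is an edge from `u` to `v`). -/
noncomputable def NIn {V : Type*} [Fintype V] (E : V → V → Prop) (v : V) : Finset V :=
  Finset.univ.filter (fun u => E u v)

/-- A set `S` is `r`-reachable if some vertex of `S` has at least `r` in-neighbors outside `S`. -/
def RReachable {V : Type*} [Fintype V] (E : V → V → Prop) (r : ℕ) (S : Finset V) : Prop :=
  ∃ v ∈ S, r ≤ ((NIn E v) \ S).card

/-- A directed graph is `r`-robust if for every pair of disjoint nonempty vertex subsets,
at least one of them is `r`-reachable. -/
def RRobust {V : Type*} [Fintype V] (E : V → V → Prop) (r : ℕ) : Prop :=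
  ∀ S₁ S₂ : Finset V, S₁.Nonempty → S₂.Nonempty → Disjoint S₁ S₂ →
    RReachable E r S₁ ∨ RReachable E r S₂

/-- In a `(2F+1)`-robust graph with an `F`-local adversarial set `A`, if each regular
node `v` retains a set `J(v)` of regular in-neighbors obtained by discarding at most
`2F` in-neighbors, then the graph on the regular nodes `R = Aᶜ` with an edge from `u`
to `v` whenever `u ∈ J(v)` is rooted. -/
theorem stmt11 {V : Type*} [Fintype V] [DecidableEq V] (F : ℕ) (E : V → V → Prop)
    (hrobust : RRobust E (2 * F + 1))
    (A : Finset V) (hlocal : ∀ v ∉ A, ((NIn E v) ∩ A).card ≤ F)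
    (hR : (Aᶜ : Finset V).Nonempty)
    (J : V → Finset V)
    (hJsub : ∀ v ∈ (Aᶜ : Finset V), J v ⊆ (NIn E v) ∩ Aᶜ)
    (hJcard : ∀ v ∈ (Aᶜ : Finset V), ((NIn E v) \ J v).card ≤ 2 * F) :
    ∃ r ∈ (Aᶜ : Finset V), ∀ v ∈ (Aᶜ : Finset V),
      Relation.ReflTransGen (fun u w : V => w ∈ (Aᶜ : Finset V) ∧ u ∈ J w) r v := by
  classical
  set rel : V → V → Prop := fun u w => w ∈ (Aᶜ : Finset V) ∧ u ∈ J w with hrel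
  set Closed : Finset V → Prop :=
    fun S => S ⊆ (Aᶜ : Finset V) ∧ ∀ v ∈ S, J v ⊆ S with hClosed
  -- nonempty closed sets are not (2F+1)-reachable
  have hnotreach : ∀ S : Finset V, Closed S → ¬ RReachable E (2 * F + 1) S := by
    rintro S ⟨hSR, hSc⟩ ⟨v, hvS, hcard⟩
    have hvR := hSR hvS
    have hsub : (NIn E v) \ S ⊆ (NIn E v) \ J v := by
      intro x hx
      simp only [Finset.mem_sdiff] at hx ⊢
      exact ⟨hx.1, fun hxJ => hx.2 (hSc v hvS hxJ)⟩
    have hcard' : 2 * F + 1 ≤ ((NIn E v) \ S).card := by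
      convert hcard using 4
    have h2 := hcard'.trans ((Finset.card_le_card hsub).trans (hJcard v hvR))
    omega
  -- Aᶜ itself is closed
  have hRc : Closed (Aᶜ : Finset V) := by
    refine ⟨le_refl _, fun v hv => ?_⟩
    intro x hx
    exact (Finset.mem_inter.mp (hJsub v hv hx)).2
  -- collection of nonempty closed sets
  let C : Finset (Finset V) := Finset.univ.filter (fun S => S.Nonempty ∧ Closed S)
  have hCne : C.Nonempty := ⟨(Aᶜ : Finset V), Finset.mem_filter.mpr ⟨Finset.mem_univ _, hR, hRc⟩⟩
  obtain ⟨M, hMC, hMmin⟩ := Finset.exists_min_image C Finset.card hCne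
  have hM : M.Nonempty ∧ Closed M := by simpa [C] using hMC
  obtain ⟨r, hrM⟩ := hM.1
  refine ⟨r, hM.2.1 hrM, fun v hv => ?_⟩
  -- ancestors of v
  let Anc : Finset V := Finset.univ.filter (fun u => Relation.ReflTransGen rel u v)
  have hAncR : Anc ⊆ (Aᶜ : Finset V) := by
    intro u hu
    simp only [Anc, Finset.mem_filter, Finset.mem_univ, true_and] at hu
    rcases hu.cases_head with h | ⟨w, hw, _⟩
    · exact h ▸ hv
    · exact (Finset.mem_inter.mp (hJsub w hw.1 hw.2)).2
  have hAncClosed : Closed Anc := by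
    refine ⟨hAncR, fun u hu x hx => ?_⟩
    have huA : u ∈ (Aᶜ : Finset V) := hAncR hu
    simp only [Anc, Finset.mem_filter, Finset.mem_univ, true_and] at hu ⊢
    exact Relation.ReflTransGen.head ⟨huA, hx⟩ hu
  have hAncNe : Anc.Nonempty := ⟨v, Finset.mem_filter.mpr ⟨Finset.mem_univ _, Relation.ReflTransGen.refl⟩⟩
  -- M and Anc intersect
  by_cases hdisj : Disjoint M Anc
  · rcases hrobust M Anc hM.1 hAncNe hdisj with h | h
    · exact absurd h (hnotreach M hM.2)
    · exact absurd h (hnotreach Anc hAncClosed)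
  · obtain ⟨x, hxM, hxAnc⟩ := Finset.not_disjoint_iff.mp hdisj
    have hIC : Closed (M ∩ Anc) := by
      refine ⟨fun y hy => hM.2.1 (Finset.mem_inter.mp hy).1, fun y hy z hz => ?_⟩
      rw [Finset.mem_inter] at hy ⊢
      exact ⟨hM.2.2 y hy.1 hz, hAncClosed.2 y hy.2 hz⟩
    have hImem : M ∩ Anc ∈ C := by
      simp only [C, Finset.mem_filter, Finset.mem_univ, true_and]
      exact ⟨⟨x, Finset.mem_inter.mpr ⟨hxM, hxAnc⟩⟩, hIC⟩
    have hMle := hMmin _ hImem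
    have hsub : M ∩ Anc ⊆ M := Finset.inter_subset_left
    have heq : M ∩ Anc = M := Finset.eq_of_subset_of_card_le hsub hMle
    have hrAnc : r ∈ Anc := by
      have hrI : r ∈ M ∩ Anc := by rw [heq]; exact hrM
      exact (Finset.mem_inter.mp hrI).2
    simpa [Anc, rel] using (Finset.mem_filter.mp hrAnc).2
end

section
/- Let F ∈ ℕ, η > 0, L > 0, and let G = (V, E) be a directed graph on a finite vertex set that is (2F+1)-robust. Let A ⊆ V be an F-local set of Byzantine adversarial nodes and R = V ∖ A the regular nodes, each regular node i holding a convex function f_i : ℝ → ℝ all of whose subgradients are bounded in magnitude by L. Suppose the regular nodes run the LF dynamics with parameter F in the Byzantine model with weights lower bounded by η and nonnegative step-sizes α_t → 0. Then there exists a sequence of stochastic vectors q_t ∈ ℝ^R (nonnegative entries summing to 1), t ∈ ℕ, such that max_{i∈R} |x_i(t) − ∑_{j∈R} (q_t)_j x_j(t)| → 0 as t → ∞; in particular the regular nodes reach consensus regardless of the adversarial nodes' transmissions. -/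
open Filter
open scoped Classical

/-- A directed graph is `(r,s)`-robust if for every pair of disjoint nonempty vertex
subsets `S₁, S₂`, either every node of `S₁` has at least `r` in-neighbors outside `S₁`,
or every node of `S₂` has at least `r` in-neighbors outside `S₂`, or at least `s` nodes
of `S₁ ∪ S₂` have at least `r` in-neighbors outside their respective sets. -/
def RSRobust {V : Type*} [Fintype V] (E : V → V → Prop) (r s : ℕ) : Prop :=
  ∀ S₁ S₂ : Finset V, S₁.Nonempty → S₂.Nonempty → Disjoint S₁ S₂ →
    (∀ v ∈ S₁, r ≤ ((NIn E v) \ S₁).card) ∨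
    (∀ v ∈ S₂, r ≤ ((NIn E v) \ S₂).card) ∨
    s ≤ ((S₁.filter (fun v => r ≤ ((NIn E v) \ S₁).card)) ∪
         (S₂.filter (fun v => r ≤ ((NIn E v) \ S₂).card))).card

/-- The LF dynamics with parameter `F` in the malicious (broadcast) model: at each
time-step, each regular node `i ∈ R` filters the values of its in-neighbors (the same
broadcast values `x t j` for all receivers), forms a convex combination of its own value
and the retained values with weights lower bounded by `η`, and takes a subgradient step
of its local function `f i` with step-size `α t`. -/
def LFMalicious {V : Type*} [Fintype V] [DecidableEq V] (E : V → V → Prop) (F : ℕ)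
    (η : ℝ) (R : Finset V) (f : V → ℝ → ℝ) (α : ℕ → ℝ) (x : ℕ → V → ℝ) : Prop :=
  ∀ t : ℕ, ∀ i ∈ R, ∃ (J : Finset V) (a : V → ℝ) (d : ℝ),
    IsLFRetained F (NIn E i) (x t) (x t i) J ∧
    (∀ j ∈ insert i J, η ≤ a j) ∧
    a i + ∑ j ∈ J, a j = 1 ∧
    IsSubgradient (f i) (a i * x t i + ∑ j ∈ J, a j * x t j) d ∧
    x (t + 1) i = (a i * x t i + ∑ j ∈ J, a j * x t j) - α t * d

/-- The LF dynamics with parameter `F` in the Byzantine model: `χ t i j` is the value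
received by node `i` from its in-neighbor `j` at time `t` (equal to the true state
`x t j` whenever `j` is regular, arbitrary otherwise); each regular node filters the
received values, forms a convex combination with weights lower bounded by `η`, and takes
a subgradient step of its local function. -/
def LFByzantine {V : Type*} [Fintype V] [DecidableEq V] (E : V → V → Prop) (F : ℕ)
    (η : ℝ) (R : Finset V) (f : V → ℝ → ℝ) (α : ℕ → ℝ) (x : ℕ → V → ℝ)
    (χ : ℕ → V → V → ℝ) : Prop :=
  (∀ t : ℕ, ∀ i ∈ R, ∀ j ∈ R, χ t i j = x t j) ∧
  ∀ t : ℕ, ∀ i ∈ R, ∃ (J : Finset V) (a : V → ℝ) (d : ℝ),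
    IsLFRetained F (NIn E i) (χ t i) (x t i) J ∧
    (∀ j ∈ insert i J, η ≤ a j) ∧
    a i + ∑ j ∈ J, a j = 1 ∧
    IsSubgradient (f i) (a i * x t i + ∑ j ∈ J, a j * χ t i j) d ∧
    x (t + 1) i = (a i * x t i + ∑ j ∈ J, a j * χ t i j) - α t * d

/-!
Let `M t` and `m t` be the largest and smallest regular values. At most `F` in-neighbours of a
regular node are adversarial, so every value outside `[m t, M t]` is filtered out and the
subgradient steps widen this interval by at most `α t L`. A node above a threshold `c` with
`2F + 1` in-neighbours at or below `c` retains one of them, and its weight `η` pulls the node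
below `B - η (B - c)`. Applying robustness to the sets of nodes near the top and near the bottom
of the interval, one of them empties within `|Aᶜ|` steps, so the spread `M - m` contracts by the
factor `1 - η ^ |Aᶜ| / 2` over each such window up to a vanishing drift, and tends to `0`. Then
`q t` can be taken to be the indicator of any fixed regular node.
-/

open Finset

theorem tendsto_zero_of_le_mul_add {c e : ℕ → ℝ} {ρ : ℝ} (hρ : ρ < 1) (hc : ∀ k, 0 ≤ c k)
    (hrec : ∀ k, c (k + 1) ≤ ρ * c k + e k) (he : Tendsto e atTop (nhds 0)) :
    Tendsto c atTop (nhds 0) := by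
  set ρ' := max ρ 0
  have hrec' : ∀ k, c (k + 1) ≤ ρ' * c k + e k := fun k =>
    (hrec k).trans (by gcongr; exacts [hc k, le_max_left ρ 0])
  have hρ'1 : ρ' < 1 := max_lt hρ zero_lt_one
  refine tendsto_order.2 ⟨fun a ha => Eventually.of_forall fun k => ha.trans_le (hc k),
    fun δ hδ => ?_⟩
  obtain ⟨K, hK⟩ := eventually_atTop.1
    (he.eventually (eventually_le_nhds (by nlinarith : (0 : ℝ) < (1 - ρ') * (δ / 2))))
  have hgeom : ∀ j, c (K + j) ≤ δ / 2 + ρ' ^ j * c K := by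
    intro j
    induction j with
    | zero => simp only [add_zero, pow_zero, one_mul]; linarith
    | succ j ih =>
      calc c (K + j + 1) ≤ ρ' * c (K + j) + (1 - ρ') * (δ / 2) :=
            (hrec' _).trans (by linarith [hK (K + j) (by omega)])
        _ ≤ ρ' * (δ / 2 + ρ' ^ j * c K) + (1 - ρ') * (δ / 2) := by
            gcongr
        _ = δ / 2 + ρ' ^ (j + 1) * c K := by ring
  obtain ⟨J, hJ⟩ := eventually_atTop.1
    (((tendsto_pow_atTop_nhds_zero_of_lt_one (le_max_right ρ 0) hρ'1).mul_const (c K)).eventually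
      (gt_mem_nhds (by linarith : (0 : ℝ) * c K < δ / 2)))
  refine eventually_atTop.2 ⟨K + J, fun k hk => ?_⟩
  obtain ⟨j, rfl⟩ := Nat.exists_eq_add_of_le (le_of_add_le_left hk)
  linarith [hgeom j, hJ j (by omega)]

theorem tendsto_zero_of_le_mul_add_of_period {b e : ℕ → ℝ} {ρ : ℝ} {n : ℕ} (hn : n ≠ 0)
    (hρ : ρ < 1) (hb : ∀ t, 0 ≤ b t) (hrec : ∀ t, b (t + n) ≤ ρ * b t + e t)
    (he : Tendsto e atTop (nhds 0)) : Tendsto b atTop (nhds 0) := by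
  -- the sums of `b` over consecutive blocks of length `n` satisfy a one-step recursion
  set c : ℕ → ℝ := fun k => ∑ r ∈ range n, b (k * n + r)
  have hblock : Tendsto (fun k => ∑ r ∈ range n, e (k * n + r)) atTop (nhds 0) := by
    simpa using tendsto_finsetSum (range n) fun r _ =>
      he.comp (tendsto_atTop_mono (fun k => Nat.le_add_right_of_le
        (Nat.le_mul_of_pos_right k (Nat.pos_of_ne_zero hn))) tendsto_id)
  have hc : Tendsto c atTop (nhds 0) := by
    refine tendsto_zero_of_le_mul_add hρ (fun k => sum_nonneg fun r _ => hb _) (fun k => ?_) hblock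
    calc c (k + 1) = ∑ r ∈ range n, b ((k * n + r) + n) := by
          refine sum_congr rfl fun r _ => congrArg b ?_; ring
      _ ≤ ∑ r ∈ range n, (ρ * b (k * n + r) + e (k * n + r)) := sum_le_sum fun r _ => hrec _
      _ = ρ * c k + ∑ r ∈ range n, e (k * n + r) := by rw [sum_add_distrib, mul_sum]
  refine squeeze_zero hb (fun t => ?_) (hc.comp (Nat.tendsto_div_const_atTop hn))
  calc b t = b (t / n * n + t % n) := by rw [Nat.div_add_mod']
    _ ≤ c (t / n) := single_le_sum (f := fun r => b (t / n * n + r)) (fun r _ => hb _)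
        (mem_range.2 (Nat.mod_lt t (Nat.pos_of_ne_zero hn)))

theorem sup'_sub_inf'_le {ι : Type*} {s : Finset ι} (hs : s.Nonempty) {g : ι → ℝ} {K : ℝ}
    (h : ∀ i ∈ s, ∀ j ∈ s, g i - g j ≤ K) : s.sup' hs g - s.inf' hs g ≤ K := by
  have : s.sup' hs g ≤ K + s.inf' hs g :=
    sup'_le _ _ fun i hi => by
      linarith [le_inf' hs g fun j hj => (by linarith [h i hi j hj] : g i - K ≤ g j)]
  linarith

theorem RRobust.exists_eq_empty {V : Type*} [Fintype V] [DecidableEq V] {E : V → V → Prop}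
    {r n : ℕ} (h : RRobust E r) {S T : ℕ → Finset V} (hdisj : ∀ s, Disjoint (S s) (T s))
    (hS : ∀ s, ∀ i ∈ S (s + 1), i ∈ S s ∧ ((NIn E i) \ S s).card < r)
    (hT : ∀ s, ∀ i ∈ T (s + 1), i ∈ T s ∧ ((NIn E i) \ T s).card < r)
    (hn : (S 0).card + (T 0).card ≤ n) : S n = ∅ ∨ T n = ∅ := by
  have hSsub : ∀ s, S (s + 1) ⊆ S s := fun s i hi => (hS s i hi).1
  have hTsub : ∀ s, T (s + 1) ⊆ T s := fun s i hi => (hT s i hi).1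
  have hdec : ∀ s, (S s).Nonempty → (T s).Nonempty →
      (S (s + 1)).card + (T (s + 1)).card < (S s).card + (T s).card := by
    intro s hSne hTne
    rcases h _ _ hSne hTne (hdisj s) with ⟨v, hv, hvr⟩ | ⟨v, hv, hvr⟩
    · replace hvr : r ≤ ((NIn E v) \ S s).card := by convert hvr
      have hlt : S (s + 1) ⊂ S s := (ssubset_iff_of_subset (hSsub s)).2
        ⟨v, hv, fun hv' => (hS s v hv').2.not_ge hvr⟩
      have := card_lt_card hlt
      have := card_le_card (hTsub s)
      omega
    · replace hvr : r ≤ ((NIn E v) \ T s).card := by convert hvr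
      have hlt : T (s + 1) ⊂ T s := (ssubset_iff_of_subset (hTsub s)).2
        ⟨v, hv, fun hv' => (hT s v hv').2.not_ge hvr⟩
      have := card_lt_card hlt
      have := card_le_card (hSsub s)
      omega
  have hcount : ∀ s, (S s).Nonempty → (T s).Nonempty → (S s).card + (T s).card + s ≤ n := by
    intro s
    induction s with
    | zero => intro _ _; omega
    | succ s ih =>
      intro hSne hTne
      have := ih (hSne.mono (hSsub s)) (hTne.mono (hTsub s))
      have := hdec s (hSne.mono (hSsub s)) (hTne.mono (hTsub s))
      omega
  by_contra hne
  simp only [not_or, ← ne_eq, ← nonempty_iff_ne_empty] at hne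
  have := hcount n hne.1 hne.2
  have := card_pos.2 hne.1
  omega

section Filtering

variable {ι : Type*} [DecidableEq ι] {F : ℕ} {N J : Finset ι} {ξ : ι → ℝ} {xi : ℝ}

theorem IsLFRetained.neg (h : IsLFRetained F N ξ xi J) :
    IsLFRetained F N (fun j => -ξ j) (-xi) J := by
  obtain ⟨H, L, hJ, hH⟩ := h
  have hhigh : N.filter (fun j => -xi < -ξ j) = N.filter (fun j => ξ j < xi) := by
    simp only [neg_lt_neg_iff]
  have hlow : N.filter (fun j => -ξ j < -xi) = N.filter (fun j => xi < ξ j) := by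
    simp only [neg_lt_neg_iff]
  refine ⟨L, H, by rw [hJ, union_comm], ?_⟩
  simp only [hhigh, hlow, neg_le_neg_iff]
  tauto

theorem IsLFRetained.le_of_forall_le (h : IsLFRetained F N ξ xi J) {A : Finset ι}
    (hA : (N ∩ A).card ≤ F) {M : ℝ} (hxi : xi ≤ M) (hreg : ∀ j ∈ N, j ∉ A → ξ j ≤ M) :
    ∀ j ∈ J, ξ j ≤ M := by
  obtain ⟨H, L, rfl, hHsub, hHtop, hHall, hHcard, -⟩ := h
  intro j hj
  by_contra! hjM
  obtain ⟨hjN, hjHL⟩ := mem_sdiff.1 hj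
  have hjH : j ∉ H := fun h => hjHL (mem_union_left L h)
  have hjhigh : j ∈ N.filter (fun k => xi < ξ k) := mem_filter.2 ⟨hjN, hxi.trans_lt hjM⟩
  have hcard : F < (N.filter (fun k => xi < ξ k)).card := by
    by_contra! hle
    exact hjH (hHall hle ▸ hjhigh)
  have hadv : ∀ k ∈ N, M < ξ k → k ∈ N ∩ A := fun k hk hkM =>
    mem_inter.2 ⟨hk, by_contra fun hkA => (hreg k hk hkA).not_gt hkM⟩
  have hsub : insert j H ⊆ N ∩ A := insert_subset (hadv j hjN hjM) fun k hk =>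
    hadv k (mem_filter.1 (hHsub hk)).1 (hjM.trans_le (hHtop k hk j (mem_sdiff.2 ⟨hjhigh, hjH⟩)))
  have := card_le_card hsub
  rw [card_insert_of_notMem hjH, hHcard hcard] at this
  omega

theorem IsLFRetained.exists_le (h : IsLFRetained F N ξ xi J) {c : ℝ} (hc : c < xi)
    (hcard : F < (N.filter (fun j => ξ j ≤ c)).card) : ∃ j ∈ J, ξ j ≤ c := by
  obtain ⟨H, L, rfl, hHsub, -, -, -, -, -, hLall, hLcard⟩ := h
  have hL : L.card ≤ F := by
    by_cases hle : (N.filter (fun j => ξ j < xi)).card ≤ F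
    · rwa [hLall hle]
    · rw [hLcard (not_le.1 hle)]
  obtain ⟨j, hj⟩ : ((N.filter (fun j => ξ j ≤ c)) \ L).Nonempty := by
    rw [← card_pos]
    have := le_card_sdiff L (N.filter (fun j => ξ j ≤ c))
    omega
  obtain ⟨hjlow, hjL⟩ := mem_sdiff.1 hj
  obtain ⟨hjN, hjc⟩ := mem_filter.1 hjlow
  have hjH : j ∉ H := fun hjH => ((mem_filter.1 (hHsub hjH)).2.trans_le hjc).not_gt hc
  exact ⟨j, mem_sdiff.2 ⟨hjN, by simp [hjH, hjL]⟩, hjc⟩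

end Filtering

theorem isSubgradient_comp_neg_iff {f : ℝ → ℝ} {z d : ℝ} :
    IsSubgradient (fun y => f (-y)) z d ↔ IsSubgradient f (-z) (-d) := by
  constructor <;> intro h y <;>
    simpa [neg_neg, mul_comm, mul_sub, mul_add, add_comm, sub_eq_add_neg] using h (-y)

theorem HasBoundedSubgradients.comp_neg {f : ℝ → ℝ} {L : ℝ} (h : HasBoundedSubgradients f L) :
    HasBoundedSubgradients (fun y => f (-y)) L := fun z d hd => by
  simpa using h (-z) (-d) (isSubgradient_comp_neg_iff.1 hd)

theorem weighted_sum_le_sub {ι : Type*} {J : Finset ι} {a v : ι → ℝ} {a₀ y η B c : ℝ}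
    (hη : 0 ≤ η) (ha₀ : η ≤ a₀) (ha : ∀ j ∈ J, η ≤ a j) (hsum : a₀ + ∑ j ∈ J, a j = 1)
    (hy : y ≤ B) (hv : ∀ j ∈ J, v j ≤ B) (hlow : y ≤ c ∨ ∃ k ∈ J, v k ≤ c) :
    a₀ * y + ∑ j ∈ J, a j * v j ≤ B - η * (B - c) := by
  have hterm : ∀ j ∈ J, 0 ≤ a j * (B - v j) := fun j hj =>
    mul_nonneg (hη.trans (ha j hj)) (sub_nonneg.2 (hv j hj))
  have hgap : B - (a₀ * y + ∑ j ∈ J, a j * v j) = a₀ * (B - y) + ∑ j ∈ J, a j * (B - v j) := by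
    simp only [mul_sub, sum_sub_distrib, ← sum_mul]
    linear_combination (-B) * hsum
  rcases hlow with hyc | ⟨k, hk, hvk⟩
  · have : η * (B - c) ≤ a₀ * (B - y) := by
      nlinarith [mul_nonneg (sub_nonneg.2 ha₀) (sub_nonneg.2 hy), mul_nonneg hη (sub_nonneg.2 hyc)]
    linarith [sum_nonneg hterm]
  · have : η * (B - c) ≤ a k * (B - v k) := by
      nlinarith [mul_nonneg (sub_nonneg.2 (ha k hk)) (sub_nonneg.2 (hv k hk)),
        mul_nonneg hη (sub_nonneg.2 hvk)]
    linarith [single_le_sum hterm hk, mul_nonneg (hη.trans ha₀) (sub_nonneg.2 hy)]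

namespace LFByzantine

variable {V : Type*} [Fintype V] [DecidableEq V] {E : V → V → Prop} {F : ℕ} {η L : ℝ}
  {R A : Finset V} {f : V → ℝ → ℝ} {α : ℕ → ℝ} {x : ℕ → V → ℝ} {χ : ℕ → V → V → ℝ}

theorem neg (h : LFByzantine E F η R f α x χ) :
    LFByzantine E F η R (fun i y => f i (-y)) α (fun t j => -x t j) (fun t i j => -χ t i j) := by
  refine ⟨fun t i hi j hj => by simp only [h.1 t i hi j hj], fun t i hi => ?_⟩
  obtain ⟨J, a, d, hJ, ha, hsum, hsub, hx⟩ := h.2 t i hi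
  have hz : a i * -x t i + ∑ j ∈ J, a j * -χ t i j = -(a i * x t i + ∑ j ∈ J, a j * χ t i j) := by
    simp only [mul_neg, sum_neg_distrib, neg_add]
  refine ⟨J, a, -d, hJ.neg, ha, hsum, ?_, ?_⟩
  · rwa [hz, isSubgradient_comp_neg_iff, neg_neg, neg_neg]
  · simp only [hz, hx]
    ring

theorem weight_bound_le_one (h : LFByzantine E F η R f α x χ) (hη : 0 ≤ η) {i : V}
    (hi : i ∈ R) : η ≤ 1 := by
  obtain ⟨J, a, -, -, ha, hsum, -⟩ := h.2 0 i hi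
  have := sum_nonneg fun j hj => hη.trans (ha j (mem_insert_of_mem hj))
  linarith [ha i (mem_insert_self i J)]

/-- Otherwise the node itself, or one of its at least `F + 1` regular in-neighbours of value at
most `c` that survives the filter, carries weight at least `η`. -/
theorem lt_and_card_lt_of_lt_succ (hη : 0 ≤ η) (hlocal : ∀ v ∉ A, ((NIn E v) ∩ A).card ≤ F)
    (hbdd : ∀ i ∈ Aᶜ, HasBoundedSubgradients (f i) L) (hα0 : ∀ t, 0 ≤ α t)
    (h : LFByzantine E F η Aᶜ f α x χ) {t : ℕ} {i : V}
    (hi : i ∈ Aᶜ) {B c : ℝ} (hB : ∀ j ∈ Aᶜ, x t j ≤ B)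
    (hlt : B - η * (B - c) + α t * L < x (t + 1) i) :
    c < x t i ∧ ((NIn E i) \ Aᶜ.filter (fun j => c < x t j)).card < 2 * F + 1 := by
  obtain ⟨J, a, d, hJ, ha, hsum, hsg, hx⟩ := h.2 t i hi
  have hiA : i ∉ A := mem_compl.1 hi
  have hreg : ∀ j ∉ A, χ t i j = x t j := fun j hj => h.1 t i hi j (mem_compl.2 hj)
  have hJB : ∀ j ∈ J, χ t i j ≤ B := hJ.le_of_forall_le (hlocal i hiA) (hB i hi)
    fun j _ hj => (hreg j hj).symm ▸ hB j (mem_compl.2 hj)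
  have hdrift : -(α t * d) ≤ α t * L := by
    have := mul_le_mul_of_nonneg_left (neg_le_of_abs_le (hbdd i hi _ d hsg)) (hα0 t)
    linarith
  by_contra hcon
  rw [not_and_or, not_lt, not_lt] at hcon
  have hlow : x t i ≤ c ∨ ∃ k ∈ J, χ t i k ≤ c := by
    refine (le_or_gt (x t i) c).imp id fun hc => hJ.exists_le hc ?_
    have hfar := hcon.resolve_left hc.not_ge
    have hsub : (NIn E i \ Aᶜ.filter (fun j => c < x t j)) \ A ⊆
        (NIn E i).filter (fun j => χ t i j ≤ c) := by
      intro j hj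
      simp only [Finset.mem_sdiff, mem_filter, mem_compl, not_and, not_lt] at hj
      exact mem_filter.2 ⟨hj.1.1, (hreg j hj.2).symm ▸ hj.1.2 hj.2⟩
    have hadv := card_le_card (inter_subset_inter_right (u := A)
      (sdiff_subset (s := NIn E i) (t := Aᶜ.filter (fun j => c < x t j))))
    have := card_sdiff_add_card_inter (NIn E i \ Aᶜ.filter (fun j => c < x t j)) A
    have := card_le_card hsub
    have := hlocal i hiA
    omega
  have := weighted_sum_le_sub hη (ha i (mem_insert_self i J))
    (fun j hj => ha j (mem_insert_of_mem hj)) hsum (hB i hi) hJB hlow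
  linarith

theorem le_add_of_le (hη : 0 ≤ η) (hlocal : ∀ v ∉ A, ((NIn E v) ∩ A).card ≤ F)
    (hbdd : ∀ i ∈ Aᶜ, HasBoundedSubgradients (f i) L) (hα0 : ∀ t, 0 ≤ α t)
    (h : LFByzantine E F η Aᶜ f α x χ) {t : ℕ} {B : ℝ}
    (hB : ∀ j ∈ Aᶜ, x t j ≤ B) : ∀ i ∈ Aᶜ, x (t + 1) i ≤ B + α t * L := fun i hi => by
  by_contra! hlt
  have := (lt_and_card_lt_of_lt_succ hη hlocal hbdd hα0 h hi hB (c := B) (by linarith)).1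
  exact (hB i hi).not_gt this

theorem le_add_sum_of_le (hη : 0 ≤ η) (hlocal : ∀ v ∉ A, ((NIn E v) ∩ A).card ≤ F)
    (hbdd : ∀ i ∈ Aᶜ, HasBoundedSubgradients (f i) L) (hα0 : ∀ t, 0 ≤ α t)
    (h : LFByzantine E F η Aᶜ f α x χ) {t₀ : ℕ} {M : ℝ}
    (hM : ∀ j ∈ Aᶜ, x t₀ j ≤ M) (s : ℕ) :
    ∀ i ∈ Aᶜ, x (t₀ + s) i ≤ M + L * ∑ u ∈ range s, α (t₀ + u) := by
  induction s with
  | zero => simpa using hM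
  | succ s ih =>
    intro i hi
    show x (t₀ + s + 1) i ≤ _
    rw [sum_range_succ]
    linarith [le_add_of_le hη hlocal hbdd hα0 h ih i hi]

theorem mem_filter_lt_and_card_lt_of_succ (hη : 0 ≤ η)
    (hlocal : ∀ v ∉ A, ((NIn E v) ∩ A).card ≤ F)
    (hbdd : ∀ i ∈ Aᶜ, HasBoundedSubgradients (f i) L) (hα0 : ∀ t, 0 ≤ α t)
    (h : LFByzantine E F η Aᶜ f α x χ) {t₀ : ℕ} {B θ : ℕ → ℝ}
    (hB : ∀ s, ∀ j ∈ Aᶜ, x (t₀ + s) j ≤ B s)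
    (hθ : ∀ s, θ (s + 1) = B s - η * (B s - θ s) + α (t₀ + s) * L) (s : ℕ) :
    ∀ i ∈ Aᶜ.filter (fun j => θ (s + 1) < x (t₀ + (s + 1)) j),
      i ∈ Aᶜ.filter (fun j => θ s < x (t₀ + s) j) ∧
      ((NIn E i) \ Aᶜ.filter (fun j => θ s < x (t₀ + s) j)).card < 2 * F + 1 := by
  intro i hi
  obtain ⟨hiA, hlt⟩ := mem_filter.1 hi
  obtain ⟨hlt', hcard⟩ :=
    lt_and_card_lt_of_lt_succ hη hlocal hbdd hα0 h hiA (hB s) (lt_of_eq_of_lt (hθ s).symm hlt)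
  exact ⟨mem_filter.2 ⟨hiA, hlt'⟩, hcard⟩

theorem sub_le_contract (hη : 0 ≤ η) (hL : 0 ≤ L)
    (hlocal : ∀ v ∉ A, ((NIn E v) ∩ A).card ≤ F)
    (hbdd : ∀ i ∈ Aᶜ, HasBoundedSubgradients (f i) L) (hα0 : ∀ t, 0 ≤ α t)
    (hrobust : RRobust E (2 * F + 1)) (h : LFByzantine E F η Aᶜ f α x χ) (t₀ : ℕ) {m M : ℝ}
    (hm : ∀ j ∈ Aᶜ, m ≤ x t₀ j) (hM : ∀ j ∈ Aᶜ, x t₀ j ≤ M) :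
    ∀ i ∈ Aᶜ, ∀ j ∈ Aᶜ, x (t₀ + Aᶜ.card) i - x (t₀ + Aᶜ.card) j ≤
      (1 - η ^ Aᶜ.card / 2) * (M - m) + 2 * (L * ∑ u ∈ range Aᶜ.card, α (t₀ + u)) := by
  intro i hi j hj
  set n := Aᶜ.card
  set drift : ℕ → ℝ := fun s => L * ∑ u ∈ range s, α (t₀ + u)
  have hη1 : η ≤ 1 := h.weight_bound_le_one hη hi
  have hdrift0 : ∀ s, 0 ≤ drift s := fun s => mul_nonneg hL (sum_nonneg fun u _ => hα0 _)
  -- the lower side is the upper side of the negated system, with `K = -m` in place of `M`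
  set θ : ℝ → ℕ → ℝ := fun K s => K + drift s - η ^ s * ((M - m) / 2)
  have hθ : ∀ K s,
      θ K (s + 1) = (K + drift s) - η * ((K + drift s) - θ K s) + α (t₀ + s) * L := by
    intro K s
    simp only [θ, drift, sum_range_succ, pow_succ]
    ring
  have hbdd' : ∀ i ∈ Aᶜ, HasBoundedSubgradients (fun y => f i (-y)) L :=
    fun i hi => (hbdd i hi).comp_neg
  have hm' : ∀ j ∈ Aᶜ, -x t₀ j ≤ -m := fun j hj => neg_le_neg (hm j hj)
  have hupper := le_add_sum_of_le hη hlocal hbdd hα0 h hM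
  have hlower := le_add_sum_of_le hη hlocal hbdd' hα0 h.neg hm'
  have hdisj : ∀ s, Disjoint (Aᶜ.filter fun j => θ M s < x (t₀ + s) j)
      (Aᶜ.filter fun j => θ (-m) s < -x (t₀ + s) j) := by
    intro s
    refine disjoint_left.2 fun k hkS hkT => ?_
    obtain ⟨hk, hkS⟩ := mem_filter.1 hkS
    have hkT := (mem_filter.1 hkT).2
    have hspread : 0 ≤ (1 - η ^ s) * (M - m) :=
      mul_nonneg (sub_nonneg.2 (pow_le_one₀ hη hη1)) (by linarith [hm k hk, hM k hk])
    simp only [θ] at hkS hkT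
    linarith [hdrift0 s]
  have hcard : (Aᶜ.filter fun j => θ M 0 < x (t₀ + 0) j).card +
      (Aᶜ.filter fun j => θ (-m) 0 < -x (t₀ + 0) j).card ≤ n := by
    rw [← card_union_of_disjoint (hdisj 0)]
    exact card_le_card (union_subset (filter_subset _ _) (filter_subset _ _))
  rcases hrobust.exists_eq_empty hdisj
      (mem_filter_lt_and_card_lt_of_succ hη hlocal hbdd hα0 h hupper (hθ M))
      (mem_filter_lt_and_card_lt_of_succ hη hlocal hbdd' hα0 h.neg hlower (hθ (-m))) hcard
    with he | he
  · have : x (t₀ + n) i ≤ θ M n :=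
      not_lt.1 fun hlt => eq_empty_iff_forall_notMem.1 he i (mem_filter.2 ⟨hi, hlt⟩)
    simp only [θ] at this
    linarith [hlower n j hj]
  · have : -x (t₀ + n) j ≤ θ (-m) n :=
      not_lt.1 fun hlt => eq_empty_iff_forall_notMem.1 he j (mem_filter.2 ⟨hj, hlt⟩)
    simp only [θ] at this
    linarith [hupper n i hi]

end LFByzantine

theorem stmt12_general {V : Type*} [Fintype V] [DecidableEq V] (F : ℕ) (η L : ℝ)
    (hη : 0 < η) (hL : 0 < L) (E : V → V → Prop)
    (hrobust : RRobust E (2 * F + 1))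
    (A : Finset V) (hlocal : ∀ v ∉ A, ((NIn E v) ∩ A).card ≤ F)
    (hR : (Aᶜ : Finset V).Nonempty)
    (f : V → ℝ → ℝ)
    (hbdd : ∀ i ∈ (Aᶜ : Finset V), HasBoundedSubgradients (f i) L)
    (α : ℕ → ℝ) (hα0 : ∀ t, 0 ≤ α t) (hαlim : Tendsto α atTop (nhds 0))
    (x : ℕ → V → ℝ) (χ : ℕ → V → V → ℝ)
    (hdyn : LFByzantine E F η Aᶜ f α x χ) :
    ∃ q : ℕ → V → ℝ,
      (∀ t, (∀ j ∈ (Aᶜ : Finset V), 0 ≤ q t j) ∧ ∑ j ∈ (Aᶜ : Finset V), q t j = 1) ∧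
      ∀ i ∈ (Aᶜ : Finset V),
        Tendsto (fun t => |x t i - ∑ j ∈ (Aᶜ : Finset V), q t j * x t j|)
          atTop (nhds 0) := by
  obtain ⟨j₀, hj₀⟩ := hR
  set n := (Aᶜ : Finset V).card
  have hn : n ≠ 0 := (card_pos.2 ⟨j₀, hj₀⟩).ne'
  set spread : ℕ → ℝ := fun t => Aᶜ.sup' ⟨j₀, hj₀⟩ (x t) - Aᶜ.inf' ⟨j₀, hj₀⟩ (x t)
  have hdist : ∀ t, ∀ i ∈ (Aᶜ : Finset V), |x t i - x t j₀| ≤ spread t := fun t i hi =>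
    abs_sub_le_iff.2 ⟨by linarith [le_sup' (x t) hi, inf'_le (x t) hj₀],
      by linarith [le_sup' (x t) hj₀, inf'_le (x t) hi]⟩
  have hdrift : Tendsto (fun t => 2 * (L * ∑ u ∈ range n, α (t + u))) atTop (nhds 0) := by
    simpa using (tendsto_finsetSum (range n) fun u _ =>
      hαlim.comp (tendsto_add_atTop_nat u)).const_mul L |>.const_mul 2
  have hspread : Tendsto spread atTop (nhds 0) :=
    tendsto_zero_of_le_mul_add_of_period hn (by linarith [pow_pos hη n])
      (fun t => (abs_nonneg _).trans (hdist t j₀ hj₀))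
      (fun t => sup'_sub_inf'_le _ (LFByzantine.sub_le_contract hη.le hL.le hlocal hbdd hα0
        hrobust hdyn t (fun j hj => inf'_le (x t) hj) (fun j hj => le_sup' (x t) hj)))
      hdrift
  refine ⟨fun _ j => if j = j₀ then 1 else 0, fun t => ⟨fun j _ => by positivity, by simp [hj₀]⟩,
    fun i hi => squeeze_zero (fun t => abs_nonneg _) (fun t => ?_) hspread⟩
  simpa [hj₀] using hdist t i hi

/-- Consensus under `F`-local Byzantine adversaries in `(2F+1)`-robust networks: there
is a sequence of stochastic vectors `q t` (supported on the regular nodes `R = Aᶜ`) such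
that every regular state tracks the convex combination `y(t) = qₜᵀ x_R(t)`; in
particular the regular nodes reach consensus regardless of the adversaries' actions. -/
theorem stmt12 {V : Type*} [Fintype V] [DecidableEq V] (F : ℕ) (η L : ℝ)
    (hη : 0 < η) (hL : 0 < L) (E : V → V → Prop)
    (hrobust : RRobust E (2 * F + 1))
    (A : Finset V) (hlocal : ∀ v ∉ A, ((NIn E v) ∩ A).card ≤ F)
    (hR : (Aᶜ : Finset V).Nonempty)
    (f : V → ℝ → ℝ)
    (hconv : ∀ i ∈ (Aᶜ : Finset V), ConvexOn ℝ Set.univ (f i))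
    (hbdd : ∀ i ∈ (Aᶜ : Finset V), HasBoundedSubgradients (f i) L)
    (α : ℕ → ℝ) (hα0 : ∀ t, 0 ≤ α t) (hαlim : Tendsto α atTop (nhds 0))
    (x : ℕ → V → ℝ) (χ : ℕ → V → V → ℝ)
    (hdyn : LFByzantine E F η Aᶜ f α x χ) :
    ∃ q : ℕ → V → ℝ,
      (∀ t, (∀ j ∈ (Aᶜ : Finset V), 0 ≤ q t j) ∧ ∑ j ∈ (Aᶜ : Finset V), q t j = 1) ∧
      ∀ i ∈ (Aᶜ : Finset V),
        Tendsto (fun t => |x t i - ∑ j ∈ (Aᶜ : Finset V), q t j * x t j|)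
          atTop (nhds 0) :=
  stmt12_general F η L hη hL E hrobust A hlocal hR f hbdd α hα0 hαlim x χ hdyn
end

section
/- Let F ∈ ℕ, η > 0, L > 0, and let G = (V, E) be a directed graph on a finite vertex set that is (F+1, F+1)-robust. Let A ⊆ V with |A| ≤ F be a set of malicious adversarial nodes and R = V ∖ A the regular nodes, each regular node i holding a convex function f_i : ℝ → ℝ all of whose subgradients are bounded in magnitude by L. Suppose the regular nodes run the LF dynamics with parameter F in the malicious (broadcast) model with weights lower bounded by η, and the nonnegative step-sizes satisfy α_t → 0. Then the regular nodes reach consensus: max_{i∈R} x_i(t) − min_{i∈R} x_i(t) → 0 as t → ∞, regardless of the adversarial nodes' values, the initial values, and the local functions. -/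
open Filter
open scoped Classical

/-!
The subgradient step moves a regular node by at most `L α t`, so it suffices to study the LF
dynamics up to a perturbation `ε t → 0`. Since at most `F` in-neighbors are adversarial, the filter
never retains a value outside the range of the regular values, which therefore grows by at most the
perturbation. Over a window of `|R|` steps, let two thresholds start at the midpoint of the regular
values and move towards the maximum and the minimum, shrinking their distance to them by a factor
`η` per step. By `(F + 1, F + 1)`-robustness, at every step some regular node beyond a threshold
has `F + 1` in-neighbors on the other side; one of them survives its filter, so the node crosses
back. After `|R|` steps one side is empty, so the spread contracts by the factor `1 - η ^ |R| / 2`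
up to the accumulated perturbation, and such a contraction with vanishing perturbations tends to
zero.
-/

open Finset

namespace IsLFRetained

variable {ι : Type*} [DecidableEq ι] {F : ℕ} {N J : Finset ι} {ξ : ι → ℝ} {xi : ℝ}

theorem neg_s15 (h : IsLFRetained F N ξ xi J) : IsLFRetained F N (fun j => -ξ j) (-xi) J := by
  obtain ⟨H, L, hJ, hH, hHmax, hHall, hHcard, hL, hLmin, hLall, hLcard⟩ := h
  simp only [IsLFRetained, neg_lt_neg_iff, neg_le_neg_iff]
  exact ⟨L, H, by rw [hJ, union_comm], hL, hLmin, hLall, hLcard, hH, hHmax, hHall, hHcard⟩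

/-- A retained value above `M` would have been discarded in favour of `F` larger ones, which
together with it would be `F + 1` elements of `B`. -/
theorem le_of_card_le (h : IsLFRetained F N ξ xi J) {B : Finset ι} (hB : #B ≤ F) {M : ℝ}
    (hxi : xi ≤ M) (hM : ∀ j ∈ N, j ∉ B → ξ j ≤ M) : ∀ j ∈ J, ξ j ≤ M := by
  obtain ⟨H, L, rfl, hH, hHmax, hHall, hHcard, -⟩ := h
  intro j hj
  by_contra! hjM
  simp only [Finset.mem_sdiff, mem_union, not_or] at hj
  obtain ⟨hjN, hjH, -⟩ := hj
  have hjP : j ∈ N.filter (fun j => xi < ξ j) := mem_filter.2 ⟨hjN, hxi.trans_lt hjM⟩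
  have hHF : #H = F := hHcard (by_contra fun hle => hjH (hHall (not_lt.1 hle) ▸ hjP))
  have mem_B : ∀ k ∈ N, M < ξ k → k ∈ B := fun k hk hMk => by
    by_contra hkB; exact (hM k hk hkB).not_gt hMk
  have hsub : insert j H ⊆ B := by
    refine insert_subset (mem_B j hjN hjM) fun k hk => ?_
    exact mem_B k (mem_filter.1 (hH hk)).1
      (hjM.trans_le (hHmax k hk j (Finset.mem_sdiff.2 ⟨hjP, hjH⟩)))
  have := card_le_card hsub
  rw [card_insert_of_notMem hjH, hHF] at this
  omega

/-- At most `F` low values are discarded, and none of these `F + 1` is discarded as a high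
value. -/
theorem exists_mem_notMem (h : IsLFRetained F N ξ xi J) (C : Finset ι)
    (hcard : F + 1 ≤ #(N \ C)) (hlt : ∀ j ∈ N \ C, ξ j < xi) : ∃ j ∈ J, j ∉ C := by
  obtain ⟨H, L, rfl, hH, -, -, -, -, -, hLall, hLcard⟩ := h
  have hLF : #L ≤ F := by
    rcases le_or_gt #(N.filter (fun j => ξ j < xi)) F with hle | hgt
    · exact hLall hle ▸ hle
    · exact (hLcard hgt).le
  obtain ⟨j, hj⟩ : ((N \ C) \ L).Nonempty := by
    rw [← card_pos]; have := le_card_sdiff L (N \ C); omega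
  simp only [Finset.mem_sdiff] at hj
  obtain ⟨⟨hjN, hjC⟩, hjL⟩ := hj
  refine ⟨j, Finset.mem_sdiff.2 ⟨hjN, fun hjHL => ?_⟩, hjC⟩
  rcases mem_union.1 hjHL with hjH | hjL'
  · exact (hlt j (Finset.mem_sdiff.2 ⟨hjN, hjC⟩)).not_gt (mem_filter.1 (hH hjH)).2
  · exact hjL hjL'

end IsLFRetained

theorem combination_le {ι : Type*} [DecidableEq ι] {J : Finset ι} {a ξ : ι → ℝ} {i j₀ : ι}
    {η M T : ℝ} (hη : 0 ≤ η) (hw : ∀ j ∈ insert i J, η ≤ a j) (hsum : a i + ∑ j ∈ J, a j = 1)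
    (hi : ξ i ≤ M) (hJ : ∀ j ∈ J, ξ j ≤ M) (hj₀ : j₀ ∈ insert i J) (hj₀T : ξ j₀ ≤ T) :
    a i * ξ i + ∑ j ∈ J, a j * ξ j ≤ (1 - η) * M + η * T := by
  set g : ι → ℝ := fun j => a j * (M - ξ j)
  have hg : ∀ j ∈ insert i J, η * (M - ξ j) ≤ g j ∧ 0 ≤ g j := fun j hj => by
    have hMj : 0 ≤ M - ξ j := by
      rcases mem_insert.1 hj with rfl | hj
      · linarith
      · linarith [hJ j hj]
    exact ⟨mul_le_mul_of_nonneg_right (hw j hj) hMj,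
      mul_nonneg (hη.trans (hw j hj)) hMj⟩
  have hsplit : M - (a i * ξ i + ∑ j ∈ J, a j * ξ j) = g i + ∑ j ∈ J, g j := by
    simp only [g, mul_sub, sum_sub_distrib, ← sum_mul]
    linear_combination (-M) * hsum
  have hgJ : ∀ j ∈ J, 0 ≤ g j := fun j hj => (hg j (mem_insert_of_mem hj)).2
  have hj₀g : η * (M - T) ≤ g i + ∑ j ∈ J, g j := by
    have := mul_le_mul_of_nonneg_left (sub_le_sub_left hj₀T M) hη
    rcases mem_insert.1 hj₀ with rfl | hj₀J
    · linarith [(hg j₀ hj₀).1, sum_nonneg hgJ]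
    · linarith [(hg j₀ hj₀).1, (hg i (mem_insert_self i J)).2, single_le_sum hgJ hj₀J]
  linarith

theorem RSRobust.exists_notMem_le_card_sdiff {V : Type*} [Fintype V] [DecidableEq V]
    {E : V → V → Prop} {F : ℕ} (h : RSRobust E (F + 1) (F + 1)) {A S₁ S₂ : Finset V}
    (hA : #A ≤ F) (hS : Disjoint S₁ S₂) (h₁ : ∃ v ∈ S₁, v ∉ A) (h₂ : ∃ v ∈ S₂, v ∉ A) :
    ∃ v ∉ A, (v ∈ S₁ ∧ F + 1 ≤ #(NIn E v \ S₁)) ∨ (v ∈ S₂ ∧ F + 1 ≤ #(NIn E v \ S₂)) := by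
  obtain ⟨v₁, hv₁, hv₁A⟩ := h₁
  obtain ⟨v₂, hv₂, hv₂A⟩ := h₂
  rcases h S₁ S₂ ⟨v₁, hv₁⟩ ⟨v₂, hv₂⟩ hS with hall | hall | hcard
  · exact ⟨v₁, hv₁A, .inl ⟨hv₁, by convert hall v₁ hv₁⟩⟩
  · exact ⟨v₂, hv₂A, .inr ⟨hv₂, by convert hall v₂ hv₂⟩⟩
  · obtain ⟨v, hv, hvA⟩ := exists_mem_notMem_of_card_lt_card (hA.trans_lt hcard)
    refine ⟨v, hvA, ?_⟩
    simp only [Finset.mem_union, mem_filter] at hv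
    rcases hv with hv | hv
    · exact .inl ⟨hv.1, by convert hv.2⟩
    · exact .inr ⟨hv.1, by convert hv.2⟩

theorem eq_empty_or_eq_empty_of_card_add_card_lt {α : Type*} {P Q : ℕ → Finset α} {n : ℕ}
    (hP : ∀ k, P (k + 1) ⊆ P k) (hQ : ∀ k, Q (k + 1) ⊆ Q k) (h₀ : #(P 0) + #(Q 0) ≤ n)
    (hlt : ∀ k, (P k).Nonempty → (Q k).Nonempty → #(P (k + 1)) + #(Q (k + 1)) < #(P k) + #(Q k)) :
    P n = ∅ ∨ Q n = ∅ := by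
  suffices ∀ k, P k = ∅ ∨ Q k = ∅ ∨ #(P k) + #(Q k) + k ≤ n by
    rcases this n with h | h | h
    · exact .inl h
    · exact .inr h
    · exact .inl (card_eq_zero.1 (by omega))
  intro k
  induction k with
  | zero => simp [h₀]
  | succ k ih =>
    rcases ih with h | h | h
    · exact .inl (subset_empty.1 (h ▸ hP k))
    · exact .inr (.inl (subset_empty.1 (h ▸ hQ k)))
    · by_cases hPk : P k = ∅
      · exact .inl (subset_empty.1 (hPk ▸ hP k))
      by_cases hQk : Q k = ∅
      · exact .inr (.inl (subset_empty.1 (hQk ▸ hQ k)))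
      have := hlt k (nonempty_iff_ne_empty.2 hPk) (nonempty_iff_ne_empty.2 hQk)
      omega

section Dynamics

variable {V : Type*} [Fintype V] [DecidableEq V] {E : V → V → Prop} {F : ℕ} {η : ℝ}

def PerturbedLF (E : V → V → Prop) (F : ℕ) (η : ℝ) (R : Finset V) (ε : ℕ → ℝ)
    (x : ℕ → V → ℝ) : Prop :=
  ∀ t, ∀ i ∈ R, ∃ (J : Finset V) (a : V → ℝ),
    IsLFRetained F (NIn E i) (x t) (x t i) J ∧ (∀ j ∈ insert i J, η ≤ a j) ∧
    a i + ∑ j ∈ J, a j = 1 ∧ |x (t + 1) i - (a i * x t i + ∑ j ∈ J, a j * x t j)| ≤ ε t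

theorem LFMalicious.perturbedLF {R : Finset V} {f : V → ℝ → ℝ} {L : ℝ} {α : ℕ → ℝ}
    {x : ℕ → V → ℝ} (h : LFMalicious E F η R f α x)
    (hf : ∀ i ∈ R, HasBoundedSubgradients (f i) L) (hα : ∀ t, 0 ≤ α t) :
    PerturbedLF E F η R (fun t => L * α t) x := fun t i hi => by
  obtain ⟨J, a, d, hJ, hw, hsum, hd, hx⟩ := h t i hi
  refine ⟨J, a, hJ, hw, hsum, ?_⟩
  rw [hx, sub_sub_cancel_left, abs_neg, abs_mul, abs_of_nonneg (hα t), mul_comm]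
  exact mul_le_mul_of_nonneg_right (hf i hi _ d hd) (hα t)

namespace PerturbedLF

variable {R : Finset V} {ε : ℕ → ℝ} {x : ℕ → V → ℝ}

theorem neg_s15 (hx : PerturbedLF E F η R ε x) : PerturbedLF E F η R ε (fun t j => -x t j) :=
  fun t i hi => by
    obtain ⟨J, a, hJ, hw, hsum, hε⟩ := hx t i hi
    refine ⟨J, a, hJ.neg_s15, hw, hsum, ?_⟩
    rw [← abs_neg]
    convert hε using 2
    simp only [mul_neg, sum_neg_distrib]
    ring

theorem le_one (hx : PerturbedLF E F η R ε x) (hR : R.Nonempty) (hη : 0 ≤ η) : η ≤ 1 := by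
  obtain ⟨i, hi⟩ := hR
  obtain ⟨J, a, -, hw, hsum, -⟩ := hx 0 i hi
  have := sum_nonneg fun j hj => hη.trans (hw j (mem_insert_of_mem hj))
  linarith [hw i (mem_insert_self i J)]

variable {A : Finset V}

/-- Some retained value at most `T` (the node's own, or one of the `F + 1` of `hcase`) carries
weight at least `η`. -/
theorem le_one_sub_mul_add (hx : PerturbedLF E F η Aᶜ ε x) (hA : #A ≤ F) (hη : 0 ≤ η) {t : ℕ}
    {i : V} (hi : i ∈ Aᶜ) {M T : ℝ} (hM : ∀ j ∈ Aᶜ, x t j ≤ M)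
    (hcase : x t i ≤ T ∨ F + 1 ≤ #(NIn E i \ univ.filter (fun v => T < x t v))) :
    x (t + 1) i ≤ (1 - η) * M + η * T + ε t := by
  obtain ⟨J, a, hJ, hw, hsum, hε⟩ := hx t i hi
  have hJM : ∀ j ∈ J, x t j ≤ M :=
    hJ.le_of_card_le hA (hM i hi) fun j _ hjA => hM j (mem_compl.2 hjA)
  obtain ⟨j₀, hj₀, hj₀T⟩ : ∃ j₀ ∈ insert i J, x t j₀ ≤ T := by
    by_cases hiT : x t i ≤ T
    · exact ⟨i, mem_insert_self i J, hiT⟩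
    have hreach := hcase.resolve_left hiT
    obtain ⟨j, hjJ, hjT⟩ := hJ.exists_mem_notMem _ hreach fun j hj => by
      simp only [Finset.mem_sdiff, mem_filter, mem_univ, true_and, not_lt] at hj
      linarith [hj.2]
    simp only [mem_filter, mem_univ, true_and, not_lt] at hjT
    exact ⟨j, mem_insert_of_mem hjJ, hjT⟩
  have := combination_le hη hw hsum (hM i hi) hJM hj₀ hj₀T
  linarith [(abs_le.1 hε).2]

theorem le_add_sum (hx : PerturbedLF E F η Aᶜ ε x) (hA : #A ≤ F) (hη : 0 ≤ η) {t : ℕ} {U : ℝ}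
    (hU : ∀ j ∈ Aᶜ, x t j ≤ U) (k : ℕ) : ∀ j ∈ Aᶜ, x (t + k) j ≤ U + ∑ s ∈ range k, ε (t + s) := by
  induction k with
  | zero => simpa using hU
  | succ k ih =>
    intro j hj
    have := hx.le_one_sub_mul_add hA hη hj ih (.inl (ih j hj))
    rw [← add_assoc, sum_range_succ]
    linarith

/-- The thresholds are designed so that the bound of `le_one_sub_mul_add` at level `k`, applied
with `M` the running upper bound of `le_add_sum`, is exactly the threshold at level `k + 1`. -/
def threshold (ε : ℕ → ℝ) (η : ℝ) (t : ℕ) (U c : ℝ) (k : ℕ) : ℝ :=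
  U + ∑ s ∈ range k, ε (t + s) - η ^ k * c

variable {t : ℕ} {U : ℝ}

theorem le_threshold_succ (hx : PerturbedLF E F η Aᶜ ε x) (hA : #A ≤ F) (hη : 0 ≤ η)
    (hU : ∀ j ∈ Aᶜ, x t j ≤ U) (c : ℝ) {k : ℕ} {i : V} (hi : i ∈ Aᶜ)
    (hcase : x (t + k) i ≤ threshold ε η t U c k ∨
      F + 1 ≤ #(NIn E i \ univ.filter (fun v => threshold ε η t U c k < x (t + k) v))) :
    x (t + (k + 1)) i ≤ threshold ε η t U c (k + 1) := by
  have := hx.le_one_sub_mul_add hA hη hi (hx.le_add_sum hA hη hU k) hcase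
  rw [← add_assoc]
  simp only [threshold, sum_range_succ, pow_succ] at this ⊢
  linarith

theorem filter_threshold_succ_subset (hx : PerturbedLF E F η Aᶜ ε x) (hA : #A ≤ F)
    (hη : 0 ≤ η) (hU : ∀ j ∈ Aᶜ, x t j ≤ U) (c : ℝ) (k : ℕ) :
    Aᶜ.filter (fun v => threshold ε η t U c (k + 1) < x (t + (k + 1)) v) ⊆
      Aᶜ.filter (fun v => threshold ε η t U c k < x (t + k) v) := fun v hv => by
  rw [mem_filter] at hv ⊢
  exact ⟨hv.1, lt_of_not_ge fun hle =>
    (hx.le_threshold_succ hA hη hU c hv.1 (.inl hle)).not_gt hv.2⟩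

theorem card_filter_threshold_succ_lt (hx : PerturbedLF E F η Aᶜ ε x) (hA : #A ≤ F)
    (hη : 0 ≤ η) (hU : ∀ j ∈ Aᶜ, x t j ≤ U) (c : ℝ) {k : ℕ} {v : V} (hv : v ∈ Aᶜ)
    (hvk : threshold ε η t U c k < x (t + k) v)
    (hreach : F + 1 ≤ #(NIn E v \ univ.filter (fun v => threshold ε η t U c k < x (t + k) v))) :
    #(Aᶜ.filter (fun v => threshold ε η t U c (k + 1) < x (t + (k + 1)) v)) <
      #(Aᶜ.filter (fun v => threshold ε η t U c k < x (t + k) v)) := by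
  refine card_lt_card ((ssubset_iff_of_subset
    (hx.filter_threshold_succ_subset hA hη hU c k)).2 ⟨v, mem_filter.2 ⟨hv, hvk⟩, fun hv' => ?_⟩)
  exact (hx.le_threshold_succ hA hη hU c hv (.inr hreach)).not_gt (mem_filter.1 hv').2

theorem threshold_add_threshold_nonneg (hη : 0 ≤ η) (hη₁ : η ≤ 1) (hε : ∀ t, 0 ≤ ε t) {M m : ℝ}
    (hmM : m ≤ M) (k : ℕ) :
    0 ≤ threshold ε η t M ((M - m) / 2) k + threshold ε η t (-m) ((M - m) / 2) k := by
  have hsum := sum_nonneg fun s (_ : s ∈ range k) => hε (t + s)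
  have hpow := mul_le_mul_of_nonneg_right (pow_le_one₀ hη hη₁ (n := k)) (sub_nonneg.2 hmM)
  simp only [threshold]
  linarith

/-- The two sets start disjoint inside `Aᶜ`, no node enters them, and by robustness some node
leaves one of them at every step. -/
theorem filter_threshold_eq_empty_or (hx : PerturbedLF E F η Aᶜ ε x)
    (hrob : RSRobust E (F + 1) (F + 1)) (hA : #A ≤ F) (hη : 0 ≤ η) {U U' c : ℝ}
    (hU : ∀ j ∈ Aᶜ, x t j ≤ U) (hU' : ∀ j ∈ Aᶜ, -x t j ≤ U')
    (hsep : ∀ k, 0 ≤ threshold ε η t U c k + threshold ε η t U' c k) :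
    Aᶜ.filter (fun v => threshold ε η t U c #Aᶜ < x (t + #Aᶜ) v) = ∅ ∨
      Aᶜ.filter (fun v => threshold ε η t U' c #Aᶜ < -x (t + #Aᶜ) v) = ∅ := by
  set P : ℕ → Finset V := fun k => Aᶜ.filter (fun v => threshold ε η t U c k < x (t + k) v)
  set Q : ℕ → Finset V := fun k => Aᶜ.filter (fun v => threshold ε η t U' c k < -x (t + k) v)
  have hdisj : ∀ k (s : Finset V),
      Disjoint (s.filter (fun v => threshold ε η t U c k < x (t + k) v))
        (s.filter (fun v => threshold ε η t U' c k < -x (t + k) v)) := fun k s =>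
    disjoint_filter.2 fun v _ hv hv' => by linarith [hsep k]
  refine eq_empty_or_eq_empty_of_card_add_card_lt (P := P) (Q := Q)
    (hx.filter_threshold_succ_subset hA hη hU c)
    (hx.neg_s15.filter_threshold_succ_subset hA hη hU' c) ?_ fun k ⟨v, hv⟩ ⟨w, hw⟩ => ?_
  · rw [← card_union_of_disjoint (hdisj 0 Aᶜ)]
    exact card_le_card (union_subset (filter_subset _ _) (filter_subset _ _))
  rw [mem_filter] at hv hw
  obtain ⟨u, hu, hreach | hreach⟩ := hrob.exists_notMem_le_card_sdiff hA (hdisj k univ)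
    ⟨v, by simpa using hv.2, mem_compl.1 hv.1⟩ ⟨w, by simpa using hw.2, mem_compl.1 hw.1⟩
  · have hP : #(P (k + 1)) < #(P k) := hx.card_filter_threshold_succ_lt hA hη hU c
      (mem_compl.2 hu) (by simpa using hreach.1) hreach.2
    have hQ : #(Q (k + 1)) ≤ #(Q k) :=
      card_le_card (hx.neg_s15.filter_threshold_succ_subset hA hη hU' c k)
    omega
  · have hQ : #(Q (k + 1)) < #(Q k) := hx.neg_s15.card_filter_threshold_succ_lt hA hη hU' c
      (mem_compl.2 hu) (by simpa using hreach.1) hreach.2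
    have hP : #(P (k + 1)) ≤ #(P k) :=
      card_le_card (hx.filter_threshold_succ_subset hA hη hU c k)
    omega

theorem spread_le (hx : PerturbedLF E F η Aᶜ ε x) (hrob : RSRobust E (F + 1) (F + 1))
    (hA : #A ≤ F) (hR : Aᶜ.Nonempty) (hη : 0 ≤ η) (hε : ∀ t, 0 ≤ ε t) (t : ℕ) :
    Aᶜ.sup' hR (x (t + #Aᶜ)) - Aᶜ.inf' hR (x (t + #Aᶜ)) ≤
      (1 - η ^ #Aᶜ / 2) * (Aᶜ.sup' hR (x t) - Aᶜ.inf' hR (x t)) +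
        2 * ∑ s ∈ range #Aᶜ, ε (t + s) := by
  set M := Aᶜ.sup' hR (x t)
  set m := Aᶜ.inf' hR (x t)
  have hM : ∀ j ∈ Aᶜ, x t j ≤ M := fun j hj => le_sup' _ hj
  have hm : ∀ j ∈ Aᶜ, -x t j ≤ -m := fun j hj => neg_le_neg (inf'_le _ hj)
  have hup : Aᶜ.sup' hR (x (t + #Aᶜ)) ≤ M + ∑ s ∈ range #Aᶜ, ε (t + s) :=
    sup'_le _ _ (hx.le_add_sum hA hη hM _)
  have hlow : m - ∑ s ∈ range #Aᶜ, ε (t + s) ≤ Aᶜ.inf' hR (x (t + #Aᶜ)) :=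
    le_inf' _ _ fun j hj => by linarith [hx.neg_s15.le_add_sum hA hη hm #Aᶜ j hj]
  have hmM : m ≤ M := by
    obtain ⟨i, hi⟩ := hR
    exact (inf'_le _ hi).trans (hM i hi)
  have hsep := threshold_add_threshold_nonneg (t := t) hη (hx.le_one hR hη) hε hmM
  rcases hx.filter_threshold_eq_empty_or hrob hA hη hM hm hsep with h | h
  · have : Aᶜ.sup' hR (x (t + #Aᶜ)) ≤ threshold ε η t M ((M - m) / 2) #Aᶜ :=
      sup'_le _ _ fun j hj => not_lt.1 (filter_eq_empty_iff.1 h hj)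
    simp only [threshold] at this
    linarith
  · have : -threshold ε η t (-m) ((M - m) / 2) #Aᶜ ≤ Aᶜ.inf' hR (x (t + #Aᶜ)) :=
      le_inf' _ _ fun j hj => neg_le.1 (not_lt.1 (filter_eq_empty_iff.1 h hj))
    simp only [threshold] at this
    linarith

end PerturbedLF

end Dynamics

theorem tendsto_zero_of_le_mul_add_s15 {u e : ℕ → ℝ} {c : ℝ} (hc₀ : 0 ≤ c) (hc₁ : c < 1)
    (hu : ∀ k, 0 ≤ u k) (h : ∀ k, u (k + 1) ≤ c * u k + e k) (he : Tendsto e atTop (nhds 0)) :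
    Tendsto u atTop (nhds 0) := by
  rw [Metric.tendsto_atTop]
  intro δ hδ
  obtain ⟨K, hK⟩ := eventually_atTop.1
    (he.eventually (gt_mem_nhds (mul_pos (sub_pos.2 hc₁) (half_pos hδ))))
  have hgeom : ∀ j, u (K + j) ≤ c ^ j * u K + δ / 2 := by
    intro j
    induction j with
    | zero => simp; positivity
    | succ j ih =>
      have := mul_le_mul_of_nonneg_left ih hc₀
      rw [← add_assoc, pow_succ]
      linarith [h (K + j), hK (K + j) (Nat.le_add_right K j)]
  obtain ⟨J, hJ⟩ := eventually_atTop.1 (((tendsto_pow_atTop_nhds_zero_of_lt_one hc₀ hc₁).mul_const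
    (u K)).eventually (gt_mem_nhds (by rw [zero_mul]; exact half_pos hδ)))
  refine ⟨K + J, fun k hk => ?_⟩
  obtain ⟨j, rfl⟩ := Nat.exists_eq_add_of_le (le_of_add_le_left hk)
  rw [Real.dist_eq, sub_zero, abs_of_nonneg (hu _)]
  linarith [hgeom j, hJ j (by omega)]

/-- Reduce to `tendsto_zero_of_le_mul_add` by summing `D` over consecutive blocks of length `N`. -/
theorem tendsto_zero_of_le_mul_add_of_period_s15 {D e : ℕ → ℝ} {c : ℝ} {N : ℕ} (hN : 0 < N)
    (hc₀ : 0 ≤ c) (hc₁ : c < 1) (hD : ∀ t, 0 ≤ D t) (h : ∀ t, D (t + N) ≤ c * D t + e t)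
    (he : Tendsto e atTop (nhds 0)) : Tendsto D atTop (nhds 0) := by
  have hblock : Tendsto (fun k => ∑ r ∈ range N, D (N * k + r)) atTop (nhds 0) := by
    refine tendsto_zero_of_le_mul_add_s15 hc₀ hc₁ (fun k => sum_nonneg fun r _ => hD _)
      (e := fun k => ∑ r ∈ range N, e (N * k + r)) (fun k => ?_) ?_
    · rw [mul_sum, ← sum_add_distrib]
      refine sum_le_sum fun r _ => ?_
      simpa only [mul_add, mul_one, add_right_comm] using h (N * k + r)
    · have hidx : ∀ r, Tendsto (fun k => N * k + r) atTop atTop := fun r =>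
        tendsto_atTop_mono (fun k => Nat.le_add_right_of_le (Nat.le_mul_of_pos_left k hN))
          tendsto_id
      simpa using tendsto_finsetSum (range N) fun r _ => he.comp (hidx r)
  refine squeeze_zero hD (fun t => ?_) (hblock.comp (Nat.tendsto_div_const_atTop hN.ne'))
  conv_lhs => rw [← Nat.div_add_mod t N]
  exact single_le_sum (f := fun r => D (N * (t / N) + r)) (fun r _ => hD _)
    (mem_range.2 (Nat.mod_lt t hN))

theorem stmt15_general {V : Type*} [Fintype V] [DecidableEq V] (F : ℕ) (η L : ℝ)
    (hη : 0 < η) (hL : 0 < L) (E : V → V → Prop)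
    (hrobust : RSRobust E (F + 1) (F + 1))
    (A : Finset V) (hA : A.card ≤ F)
    (hR : (Aᶜ : Finset V).Nonempty)
    (f : V → ℝ → ℝ)
    (hbdd : ∀ i ∈ (Aᶜ : Finset V), HasBoundedSubgradients (f i) L)
    (α : ℕ → ℝ) (hα0 : ∀ t, 0 ≤ α t) (hαlim : Tendsto α atTop (nhds 0))
    (x : ℕ → V → ℝ)
    (hdyn : LFMalicious E F η Aᶜ f α x) :
    Tendsto (fun t => (Aᶜ : Finset V).sup' hR (x t) - (Aᶜ : Finset V).inf' hR (x t))
      atTop (nhds 0) := by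
  have hx := hdyn.perturbedLF hbdd hα0
  have hε : ∀ t, 0 ≤ L * α t := fun t => mul_nonneg hL.le (hα0 t)
  have hpow : 0 < η ^ #Aᶜ ∧ η ^ #Aᶜ ≤ 1 :=
    ⟨pow_pos hη _, pow_le_one₀ hη.le (hx.le_one hR hη.le)⟩
  refine tendsto_zero_of_le_mul_add_of_period_s15 (card_pos.2 hR) (by linarith) (by linarith)
    (fun t => ?_) (hx.spread_le hrobust hA hR hη.le hε) ?_
  · obtain ⟨i, hi⟩ := hR
    exact sub_nonneg.2 ((inf'_le _ hi).trans (le_sup' _ hi))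
  · simpa using ((tendsto_finsetSum (range #Aᶜ) fun s _ =>
      (hαlim.const_mul L).comp (tendsto_add_atTop_nat s)).const_mul 2)

/-- Consensus under `F`-total malicious adversaries: if the network is
`(F+1,F+1)`-robust and the step-sizes vanish, the regular nodes running the LF dynamics
with parameter `F` reach consensus regardless of the adversaries' values, the initial
values, and the local functions. -/
theorem stmt15 {V : Type*} [Fintype V] [DecidableEq V] (F : ℕ) (η L : ℝ)
    (hη : 0 < η) (hL : 0 < L) (E : V → V → Prop)
    (hrobust : RSRobust E (F + 1) (F + 1))
    (A : Finset V) (hA : A.card ≤ F)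
    (hR : (Aᶜ : Finset V).Nonempty)
    (f : V → ℝ → ℝ)
    (hconv : ∀ i ∈ (Aᶜ : Finset V), ConvexOn ℝ Set.univ (f i))
    (hbdd : ∀ i ∈ (Aᶜ : Finset V), HasBoundedSubgradients (f i) L)
    (α : ℕ → ℝ) (hα0 : ∀ t, 0 ≤ α t) (hαlim : Tendsto α atTop (nhds 0))
    (x : ℕ → V → ℝ)
    (hdyn : LFMalicious E F η Aᶜ f α x) :
    Tendsto (fun t => (Aᶜ : Finset V).sup' hR (x t) - (Aᶜ : Finset V).inf' hR (x t))
      atTop (nhds 0) :=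
  stmt15_general F η L hη hL E hrobust A hA hR f hbdd α hα0 hαlim x hdyn
end
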